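/- The class of finite simple ∧-matroids of rank ≤ 3 has the amalgamation property: whenever M0, M1, M2 are finite simple ∧-matroids of rank ≤ 3 and f1 : M0 → M1, f2 : M0 → M2 are embeddings, there exist a finite simple ∧-matroid M3 of rank ≤ 3 and embeddings g1 : M1 → M3, g2 : M2 → M3 with g1 ∘ f1 = g2 ∘ f2. -/

import Mathlib

namespace PaoliniMatroids

open Function Set

/-- The "line" through `a` and `b` determined by a ternary collinearity relation `R`:
the set `{a, b} ∪ {x | R a b x}`. -/
def lineOf {V : Type*} (R : V → V → V → Prop) (a b : V) : Set V :=
  {a, b} ∪ {x | R a b x}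

/-- A simple ∧-matroid of rank ≤ 3, with domain `carrier` inside the ambient type `V`.
`R` is the ternary dependency (collinearity) relation and `wedge` is the 4-ary
intersection-of-lines function determined by `R`. -/
structure WM (V : Type*) where
  carrier : Set V
  R : V → V → V → Prop
  wedge : V → V → V → V → V
  R_mem : ∀ a b c, R a b c → a ∈ carrier ∧ b ∈ carrier ∧ c ∈ carrier
  wedge_mem : ∀ a b c d, a ∈ carrier → b ∈ carrier → c ∈ carrier → d ∈ carrier →
      wedge a b c d ∈ carrier
  irrefl : ∀ a b c, R a b c → a ≠ b ∧ a ≠ c ∧ b ≠ c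
  symm_swap : ∀ a b c, R a b c → R b a c
  symm_rot : ∀ a b c, R a b c → R b c a
  exchange : ∀ a b c d, R a b c → R a b d → ∀ x y z,
      x ∈ ({a, b, c, d} : Set V) → y ∈ ({a, b, c, d} : Set V) → z ∈ ({a, b, c, d} : Set V) →
      x ≠ y → x ≠ z → y ≠ z → R x y z
  wedge_det : ∀ a b c d, a ∈ carrier → b ∈ carrier → c ∈ carrier → d ∈ carrier →
      (a ≠ b ∧ c ≠ d ∧ lineOf R a b ≠ lineOf R c d ∧
        wedge a b c d ∈ lineOf R a b ∧ wedge a b c d ∈ lineOf R c d ∧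
        wedge a b c d ∉ ({a, b, c, d} : Set V)) ∨
      (wedge a b c d = a ∧ ¬ ∃ p, a ≠ b ∧ c ≠ d ∧ lineOf R a b ≠ lineOf R c d ∧
        p ∈ lineOf R a b ∧ p ∈ lineOf R c d ∧ p ∉ ({a, b, c, d} : Set V))

/-- An embedding of ∧-matroids: an injective map (on the domain) preserving `R`
in both directions and preserving the ∧-function. -/
structure IsEmb {V W : Type*} (M : WM V) (N : WM W) (f : V → W) : Prop where
  maps : ∀ x ∈ M.carrier, f x ∈ N.carrier
  inj : ∀ x ∈ M.carrier, ∀ y ∈ M.carrier, f x = f y → x = y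
  rel : ∀ a ∈ M.carrier, ∀ b ∈ M.carrier, ∀ c ∈ M.carrier,
      (M.R a b c ↔ N.R (f a) (f b) (f c))
  wedge : ∀ a ∈ M.carrier, ∀ b ∈ M.carrier, ∀ c ∈ M.carrier, ∀ d ∈ M.carrier,
      f (M.wedge a b c d) = N.wedge (f a) (f b) (f c) (f d)

/-- An isomorphism of ∧-matroids: an embedding which is onto the target domain. -/
def IsIso {V W : Type*} (M : WM V) (N : WM W) (f : V → W) : Prop :=
  IsEmb M N f ∧ N.carrier ⊆ f '' M.carrier

/-- `M` is a substructure of `N`: the domain of `M` is a subset of that of `N`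
(necessarily closed under the ∧-function of `N`) and `R`, `∧` are induced. -/
structure Sub {V : Type*} (M N : WM V) : Prop where
  sub : M.carrier ⊆ N.carrier
  rel : ∀ a ∈ M.carrier, ∀ b ∈ M.carrier, ∀ c ∈ M.carrier, (M.R a b c ↔ N.R a b c)
  wedge : ∀ a ∈ M.carrier, ∀ b ∈ M.carrier, ∀ c ∈ M.carrier, ∀ d ∈ M.carrier,
      M.wedge a b c d = N.wedge a b c d

/-- The matroid has rank 3: there are three (pairwise distinct) non-collinear points. -/
def Rank3 {V : Type*} (M : WM V) : Prop :=
  ∃ a ∈ M.carrier, ∃ b ∈ M.carrier, ∃ c ∈ M.carrier,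
    a ≠ b ∧ a ≠ c ∧ b ≠ c ∧ ¬ M.R a b c

/-- An automorphism of a ∧-matroid: a bijection of the domain preserving `R` in both
directions and preserving the ∧-function. -/
def IsAut {V : Type*} (M : WM V) (g : V → V) : Prop :=
  Set.BijOn g M.carrier M.carrier ∧
  (∀ a ∈ M.carrier, ∀ b ∈ M.carrier, ∀ c ∈ M.carrier,
      (M.R a b c ↔ M.R (g a) (g b) (g c))) ∧
  (∀ a ∈ M.carrier, ∀ b ∈ M.carrier, ∀ c ∈ M.carrier, ∀ d ∈ M.carrier,
      g (M.wedge a b c d) = M.wedge (g a) (g b) (g c) (g d))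

/-- A projective plane: a point-line incidence system where two distinct points lie on a
unique common line, two distinct lines meet in a unique point, and there are four points
no three of which are collinear. -/
structure ProjPlane where
  Point : Type
  Line : Type
  incid : Point → Line → Prop
  unique_line : ∀ p q : Point, p ≠ q → ∃! l : Line, incid p l ∧ incid q l
  unique_point : ∀ l m : Line, l ≠ m → ∃! p : Point, incid p l ∧ incid p m
  nondeg : ∃ p₁ p₂ p₃ p₄ : Point, p₁ ≠ p₂ ∧ p₁ ≠ p₃ ∧ p₁ ≠ p₄ ∧ p₂ ≠ p₃ ∧ p₂ ≠ p₄ ∧ p₃ ≠ p₄ ∧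
    ∀ l : Line, ¬(incid p₁ l ∧ incid p₂ l ∧ incid p₃ l) ∧
      ¬(incid p₁ l ∧ incid p₂ l ∧ incid p₄ l) ∧
      ¬(incid p₁ l ∧ incid p₃ l ∧ incid p₄ l) ∧
      ¬(incid p₂ l ∧ incid p₃ l ∧ incid p₄ l)

/-- The ternary relation of the simple rank-3 matroid `M_P` associated with a projective
plane: `R a b c` iff `a, b, c` are pairwise distinct collinear points. -/
def ProjPlane.Rmat (P : ProjPlane) (a b c : P.Point) : Prop :=
  a ≠ b ∧ a ≠ c ∧ b ≠ c ∧ ∃ l : P.Line, P.incid a l ∧ P.incid b l ∧ P.incid c l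

/-- `N` omits the matroid `M_P` of the projective plane `P`: no subset of the domain of `N`,
with the induced ternary relation, is isomorphic (as a matroid) to `M_P`. -/
def Omits {V : Type*} (N : WM V) (P : ProjPlane) : Prop :=
  ¬ ∃ e : P.Point → V, Function.Injective e ∧ (∀ p, e p ∈ N.carrier) ∧
      ∀ a b c, P.Rmat a b c ↔ N.R (e a) (e b) (e c)
section AbstractLines

variable {V : Type*} {R : V → V → V → Prop}

lemma mem_lineOf {a b z : V} : z ∈ lineOf R a b ↔ z = a ∨ z = b ∨ R a b z := by
  simp [lineOf, Set.mem_insert_iff, or_assoc]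

lemma left_mem_lineOf {a b : V} : a ∈ lineOf R a b := mem_lineOf.2 (Or.inl rfl)

lemma right_mem_lineOf {a b : V} : b ∈ lineOf R a b := mem_lineOf.2 (Or.inr (Or.inl rfl))

variable (hirr : ∀ a b c, R a b c → a ≠ b ∧ a ≠ c ∧ b ≠ c)
  (hsw : ∀ a b c, R a b c → R b a c)
  (hrot : ∀ a b c, R a b c → R b c a)
  (hexch : ∀ a b c d, R a b c → R a b d → ∀ x y z,
      x ∈ ({a, b, c, d} : Set V) → y ∈ ({a, b, c, d} : Set V) → z ∈ ({a, b, c, d} : Set V) →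
      x ≠ y → x ≠ z → y ≠ z → R x y z)

include hsw in
lemma lineOf_comm {a b : V} : lineOf R a b = lineOf R b a := by
  ext z
  simp only [mem_lineOf]
  constructor
  · rintro (h | h | h)
    · exact Or.inr (Or.inl h)
    · exact Or.inl h
    · exact Or.inr (Or.inr (hsw _ _ _ h))
  · rintro (h | h | h)
    · exact Or.inr (Or.inl h)
    · exact Or.inl h
    · exact Or.inr (Or.inr (hsw _ _ _ h))

include hirr hsw hrot hexch in
lemma lineOf_extend {a b c : V} (h : R a b c) : lineOf R a c = lineOf R a b := by
  have hacb : R a c b := hsw _ _ _ (hrot _ _ _ (hrot _ _ _ h))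
  ext z
  simp only [mem_lineOf]
  constructor
  · rintro (rfl | rfl | hz)
    · exact Or.inl rfl
    · exact Or.inr (Or.inr h)
    · by_cases hzb : z = b
      · exact Or.inr (Or.inl hzb)
      · refine Or.inr (Or.inr (hexch a c z b hz hacb a b z ?_ ?_ ?_
          (hirr _ _ _ h).1 (hirr _ _ _ hz).2.1 (Ne.symm hzb)))
        · simp
        · simp
        · simp
  · rintro (rfl | rfl | hz)
    · exact Or.inl rfl
    · exact Or.inr (Or.inr hacb)
    · by_cases hzc : z = c
      · exact Or.inr (Or.inl hzc)
      · refine Or.inr (Or.inr (hexch a b z c hz h a c z ?_ ?_ ?_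
          (hirr _ _ _ h).2.1 (hirr _ _ _ hz).2.1 (Ne.symm hzc)))
        · simp
        · simp
        · simp

include hirr hsw hrot hexch in
lemma lineUniqueAux {a b u v : V} (hab : a ≠ b) (hu : u ∈ lineOf R a b)
    (hv : v ∈ lineOf R a b) (huv : u ≠ v) : lineOf R u v = lineOf R a b := by
  have hcomm : ∀ x y : V, lineOf R x y = lineOf R y x := fun x y => lineOf_comm hsw
  have hext : ∀ x y z : V, R x y z → lineOf R x z = lineOf R x y :=
    fun x y z h => lineOf_extend hirr hsw hrot hexch h
  rcases mem_lineOf.1 hu with h1 | h1 | hu' <;> rcases mem_lineOf.1 hv with h2 | h2 | hv'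
  · exact absurd (h1.trans h2.symm) huv
  · rw [h1, h2]
  · rw [h1]; exact hext a b v hv'
  · rw [h1, h2]; exact hcomm b a
  · exact absurd (h1.trans h2.symm) huv
  · rw [h1, hext b a v (hsw _ _ _ hv'), hcomm b a]
  · rw [h2, hcomm u a, hext a b u hu']
  · rw [h2, hcomm u b, hext b a u (hsw _ _ _ hu'), hcomm b a]
  · have hauv : R a u v := by
      refine hexch a b u v hu' hv' a u v ?_ ?_ ?_ (hirr _ _ _ hu').2.1 (hirr _ _ _ hv').2.1 huv
      · simp
      · simp
      · simp
    rw [hext u a v (hsw _ _ _ hauv), hcomm u a, hext a b u hu']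

include hirr hsw hrot hexch in
lemma threeOnLineAux {a b u v w : V} (hab : a ≠ b) (hu : u ∈ lineOf R a b)
    (hv : v ∈ lineOf R a b) (hw : w ∈ lineOf R a b) (huv : u ≠ v) (huw : u ≠ w)
    (hvw : v ≠ w) : R u v w := by
  have := lineUniqueAux hirr hsw hrot hexch hab hu hv huv
  rw [← this] at hw
  rcases mem_lineOf.1 hw with rfl | rfl | h
  · exact absurd rfl huw
  · exact absurd rfl hvw
  · exact h

end AbstractLines

/-- Versions attached to a `WM`. -/
lemma WM.line_unique {V : Type*} (M : WM V) {a b u v : V} (hab : a ≠ b)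
    (hu : u ∈ lineOf M.R a b) (hv : v ∈ lineOf M.R a b) (huv : u ≠ v) :
    lineOf M.R u v = lineOf M.R a b :=
  lineUniqueAux M.irrefl M.symm_swap M.symm_rot M.exchange hab hu hv huv

lemma WM.three_on_line {V : Type*} (M : WM V) {a b u v w : V} (hab : a ≠ b)
    (hu : u ∈ lineOf M.R a b) (hv : v ∈ lineOf M.R a b) (hw : w ∈ lineOf M.R a b)
    (huv : u ≠ v) (huw : u ≠ w) (hvw : v ≠ w) : M.R u v w :=
  threeOnLineAux M.irrefl M.symm_swap M.symm_rot M.exchange hab hu hv hw huv huw hvw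
section Amalg

variable {V0 V1 V2 : Type} (M0 : WM V0) (M1 : WM V1) (M2 : WM V2)
  (f1 : V0 → V1) (f2 : V0 → V2)

/-- `y` is the `f2`-image of a point of `M0`. -/
def InM0 (y : V2) : Prop := ∃ x, x ∈ M0.carrier ∧ f2 x = y

/-- Carrier of the amalgam. -/
def Car3 : Set (V1 ⊕ V2) :=
  (Sum.inl '' M1.carrier) ∪ (Sum.inr '' {y | y ∈ M2.carrier ∧ ¬ InM0 M0 f2 y})

/-- `a` is the `M2`-representative of the amalgam point `u`. -/
def Rep (u : V1 ⊕ V2) (a : V2) : Prop :=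
  (u = Sum.inr a ∧ a ∈ M2.carrier ∧ ¬ InM0 M0 f2 a) ∨
  (∃ x, x ∈ M0.carrier ∧ u = Sum.inl (f1 x) ∧ a = f2 x)

/-- `u` lies on the glued line determined by `x, y ∈ M0`. -/
def OG (x y : V0) (u : V1 ⊕ V2) : Prop :=
  (∃ a, u = Sum.inl a ∧ a ∈ M1.carrier ∧ a ∈ lineOf M1.R (f1 x) (f1 y)) ∨
  (∃ b, u = Sum.inr b ∧ b ∈ M2.carrier ∧ b ∈ lineOf M2.R (f2 x) (f2 y))

/-- Collinearity in the amalgam. -/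
def Col (u v w : V1 ⊕ V2) : Prop :=
  (∃ a b c, u = Sum.inl a ∧ v = Sum.inl b ∧ w = Sum.inl c ∧ M1.R a b c) ∨
  (∃ a b c, Rep M0 M2 f1 f2 u a ∧ Rep M0 M2 f1 f2 v b ∧ Rep M0 M2 f1 f2 w c ∧ M2.R a b c) ∨
  (∃ x y, x ∈ M0.carrier ∧ y ∈ M0.carrier ∧ x ≠ y ∧
     OG M1 M2 f1 f2 x y u ∧ OG M1 M2 f1 f2 x y v ∧ OG M1 M2 f1 f2 x y w)

/-- The ternary relation of the amalgam. -/
def R3 (u v w : V1 ⊕ V2) : Prop :=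
  u ∈ Car3 M0 M1 M2 f2 ∧ v ∈ Car3 M0 M1 M2 f2 ∧ w ∈ Car3 M0 M1 M2 f2 ∧
  u ≠ v ∧ u ≠ w ∧ v ≠ w ∧ Col M0 M1 M2 f1 f2 u v w

open Classical in
noncomputable def gg2 (y : V2) : V1 ⊕ V2 :=
  if h : InM0 M0 f2 y then Sum.inl (f1 h.choose) else Sum.inr y

open Classical in
noncomputable def wedge3 (u v w t : V1 ⊕ V2) : V1 ⊕ V2 :=
  if h : ∃ p, u ≠ v ∧ w ≠ t ∧
      lineOf (R3 M0 M1 M2 f1 f2) u v ≠ lineOf (R3 M0 M1 M2 f1 f2) w t ∧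
      p ∈ lineOf (R3 M0 M1 M2 f1 f2) u v ∧ p ∈ lineOf (R3 M0 M1 M2 f1 f2) w t ∧
      p ∉ ({u, v, w, t} : Set (V1 ⊕ V2)) then h.choose else u

end Amalg
section AmalgLemmas

variable {V0 V1 V2 : Type} {M0 : WM V0} {M1 : WM V1} {M2 : WM V2}
  {f1 : V0 → V1} {f2 : V0 → V2}
  (hf1 : IsEmb M0 M1 f1) (hf2 : IsEmb M0 M2 f2)

include hf1 in
lemma f1_eq_iff {x y : V0} (hx : x ∈ M0.carrier) (hy : y ∈ M0.carrier) :
    f1 x = f1 y ↔ x = y :=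
  ⟨hf1.inj x hx y hy, fun h => by rw [h]⟩

include hf2 in
lemma f2_eq_iff {x y : V0} (hx : x ∈ M0.carrier) (hy : y ∈ M0.carrier) :
    f2 x = f2 y ↔ x = y :=
  ⟨hf2.inj x hx y hy, fun h => by rw [h]⟩

include hf1 hf2 in
lemma rel_transfer {x y z : V0} (hx : x ∈ M0.carrier) (hy : y ∈ M0.carrier)
    (hz : z ∈ M0.carrier) : M1.R (f1 x) (f1 y) (f1 z) ↔ M2.R (f2 x) (f2 y) (f2 z) :=
  (hf1.rel x hx y hy z hz).symm.trans (hf2.rel x hx y hy z hz)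

include hf1 hf2 in
lemma line_transfer {x y z : V0} (hx : x ∈ M0.carrier) (hy : y ∈ M0.carrier)
    (hz : z ∈ M0.carrier) :
    f1 z ∈ lineOf M1.R (f1 x) (f1 y) ↔ f2 z ∈ lineOf M2.R (f2 x) (f2 y) := by
  rw [mem_lineOf, mem_lineOf, f1_eq_iff hf1 hz hx, f1_eq_iff hf1 hz hy,
    f2_eq_iff hf2 hz hx, f2_eq_iff hf2 hz hy, rel_transfer hf1 hf2 hx hy hz]

include hf2 in
lemma rep_mem2 {u : V1 ⊕ V2} {a : V2} (h : Rep M0 M2 f1 f2 u a) : a ∈ M2.carrier := by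
  rcases h with ⟨_, h, _⟩ | ⟨x, hx, _, rfl⟩
  · exact h
  · exact hf2.maps x hx

include hf1 in
lemma rep_car3 {u : V1 ⊕ V2} {a : V2} (h : Rep M0 M2 f1 f2 u a) :
    u ∈ Car3 M0 M1 M2 f2 := by
  rcases h with ⟨rfl, h1, h2⟩ | ⟨x, hx, rfl, rfl⟩
  · exact Or.inr ⟨a, ⟨h1, h2⟩, rfl⟩
  · exact Or.inl ⟨f1 x, hf1.maps x hx, rfl⟩

include hf1 hf2 in
lemma rep_unique {u : V1 ⊕ V2} {a b : V2} (ha : Rep M0 M2 f1 f2 u a)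
    (hb : Rep M0 M2 f1 f2 u b) : a = b := by
  rcases ha with ⟨rfl, _, _⟩ | ⟨x, hx, hux, rfl⟩ <;>
    rcases hb with ⟨he, hb1, hb2⟩ | ⟨y, hy, huy, rfl⟩
  · exact Sum.inr.inj he
  · exact nomatch huy
  · exact nomatch (hux.symm.trans he)
  · rw [huy] at hux
    rw [hf1.inj x hx y hy (Sum.inl.inj hux).symm]

include hf2 in
lemma rep_inj {u v : V1 ⊕ V2} {a : V2} (ha : Rep M0 M2 f1 f2 u a)
    (hb : Rep M0 M2 f1 f2 v a) : u = v := by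
  rcases ha with ⟨rfl, _, hni⟩ | ⟨x, hx, rfl, rfl⟩ <;>
    rcases hb with ⟨he, hb1, hb2⟩ | ⟨y, hy, rfl, hyy⟩
  · exact he.symm
  · exact absurd ⟨y, hy, hyy.symm⟩ hni
  · exact absurd ⟨x, hx, rfl⟩ hb2
  · rw [hf2.inj x hx y hy hyy]

include hf1 hf2 in
lemma rep_ne {u v : V1 ⊕ V2} {a b : V2} (ha : Rep M0 M2 f1 f2 u a)
    (hb : Rep M0 M2 f1 f2 v b) (huv : u ≠ v) : a ≠ b := by
  intro h; subst h; exact huv (rep_inj hf2 ha hb)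

include hf1 hf2 in
lemma OG_rep {x y : V0} {u : V1 ⊕ V2} {a : V2} (hx : x ∈ M0.carrier)
    (hy : y ∈ M0.carrier) (hog : OG M1 M2 f1 f2 x y u) (ha : Rep M0 M2 f1 f2 u a) :
    a ∈ lineOf M2.R (f2 x) (f2 y) := by
  rcases hog with ⟨a1, rfl, _, hl⟩ | ⟨b, rfl, _, hl⟩
  · rcases ha with ⟨he, _, _⟩ | ⟨z, hz, hez, rfl⟩
    · exact nomatch he
    · rw [show a1 = f1 z from Sum.inl.inj hez] at hl
      exact (line_transfer hf1 hf2 hx hy hz).1 hl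
  · rcases ha with ⟨he, _, _⟩ | ⟨z, hz, hez, rfl⟩
    · rwa [Sum.inr.inj he] at hl
    · exact nomatch hez

include hf1 hf2 in
lemma rep_OG {x y : V0} {u : V1 ⊕ V2} {a : V2} (hx : x ∈ M0.carrier)
    (hy : y ∈ M0.carrier) (ha : Rep M0 M2 f1 f2 u a)
    (hl : a ∈ lineOf M2.R (f2 x) (f2 y)) : OG M1 M2 f1 f2 x y u := by
  rcases ha with ⟨rfl, ha1, _⟩ | ⟨z, hz, rfl, rfl⟩
  · exact Or.inr ⟨a, rfl, ha1, hl⟩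
  · exact Or.inl ⟨f1 z, rfl, hf1.maps z hz, (line_transfer hf1 hf2 hx hy hz).2 hl⟩

lemma col_swap {u v w : V1 ⊕ V2} (h : Col M0 M1 M2 f1 f2 u v w) :
    Col M0 M1 M2 f1 f2 v u w := by
  rcases h with ⟨a, b, c, h1, h2, h3, h4⟩ | ⟨a, b, c, h1, h2, h3, h4⟩ |
    ⟨x, y, hx, hy, hxy, h1, h2, h3⟩
  · exact Or.inl ⟨b, a, c, h2, h1, h3, M1.symm_swap _ _ _ h4⟩
  · exact Or.inr (Or.inl ⟨b, a, c, h2, h1, h3, M2.symm_swap _ _ _ h4⟩)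
  · exact Or.inr (Or.inr ⟨x, y, hx, hy, hxy, h2, h1, h3⟩)

lemma col_rot {u v w : V1 ⊕ V2} (h : Col M0 M1 M2 f1 f2 u v w) :
    Col M0 M1 M2 f1 f2 v w u := by
  rcases h with ⟨a, b, c, h1, h2, h3, h4⟩ | ⟨a, b, c, h1, h2, h3, h4⟩ |
    ⟨x, y, hx, hy, hxy, h1, h2, h3⟩
  · exact Or.inl ⟨b, c, a, h2, h3, h1, M1.symm_rot _ _ _ h4⟩
  · exact Or.inr (Or.inl ⟨b, c, a, h2, h3, h1, M2.symm_rot _ _ _ h4⟩)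
  · exact Or.inr (Or.inr ⟨x, y, hx, hy, hxy, h2, h3, h1⟩)

include hf2 in
lemma rep_gg2 {a : V2} (ha : a ∈ M2.carrier) : Rep M0 M2 f1 f2 (gg2 M0 f1 f2 a) a := by
  unfold gg2
  split
  · next h => exact Or.inr ⟨h.choose, h.choose_spec.1, rfl, h.choose_spec.2.symm⟩
  · next h => exact Or.inl ⟨rfl, ha, h⟩

include hf2 in
lemma gg2_f2 {x : V0} (hx : x ∈ M0.carrier) : gg2 M0 f1 f2 (f2 x) = Sum.inl (f1 x) := by
  unfold gg2
  rw [dif_pos ⟨x, hx, rfl⟩]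
  have h : InM0 M0 f2 (f2 x) := ⟨x, hx, rfl⟩
  rw [hf2.inj h.choose h.choose_spec.1 x hx h.choose_spec.2]

include hf1 hf2 in
lemma gg2_inj {a b : V2} (ha : a ∈ M2.carrier) (hb : b ∈ M2.carrier)
    (h : gg2 M0 f1 f2 a = gg2 M0 f1 f2 b) : a = b :=
  rep_unique hf1 hf2 (rep_gg2 hf2 ha) (h ▸ rep_gg2 hf2 hb)

include hf1 hf2 in
lemma gg2_car3 {a : V2} (ha : a ∈ M2.carrier) : gg2 M0 f1 f2 a ∈ Car3 M0 M1 M2 f2 :=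
  rep_car3 hf1 (rep_gg2 hf2 ha)

end AmalgLemmas
section AmalgLemmas2

variable {V0 V1 V2 : Type} {M0 : WM V0} {M1 : WM V1} {M2 : WM V2}
  {f1 : V0 → V1} {f2 : V0 → V2}
  (hf1 : IsEmb M0 M1 f1) (hf2 : IsEmb M0 M2 f2)

include hf1 hf2 in
/-- If the `M1`-sides of two glued lines differ, so do the `M2`-sides. -/
lemma line2_ne_of_line1_ne {x y x' y' : V0} (hx : x ∈ M0.carrier) (hy : y ∈ M0.carrier)
    (hx' : x' ∈ M0.carrier) (hy' : y' ∈ M0.carrier) (hxy : x ≠ y) (hxy' : x' ≠ y')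
    (h : lineOf M1.R (f1 x) (f1 y) ≠ lineOf M1.R (f1 x') (f1 y')) :
    lineOf M2.R (f2 x) (f2 y) ≠ lineOf M2.R (f2 x') (f2 y') := by
  intro he
  apply h
  have h1 : f1 x' ∈ lineOf M1.R (f1 x) (f1 y) := by
    rw [line_transfer hf1 hf2 hx hy hx', he]; exact left_mem_lineOf
  have h2 : f1 y' ∈ lineOf M1.R (f1 x) (f1 y) := by
    rw [line_transfer hf1 hf2 hx hy hy', he]; exact right_mem_lineOf
  exact (M1.line_unique ((f1_eq_iff hf1 hx hy).not.2 hxy) h1 h2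
    ((f1_eq_iff hf1 hx' hy').not.2 hxy')).symm

include hf1 hf2 in
lemma line1_ne_of_line2_ne {x y x' y' : V0} (hx : x ∈ M0.carrier) (hy : y ∈ M0.carrier)
    (hx' : x' ∈ M0.carrier) (hy' : y' ∈ M0.carrier) (hxy : x ≠ y) (hxy' : x' ≠ y')
    (h : lineOf M2.R (f2 x) (f2 y) ≠ lineOf M2.R (f2 x') (f2 y')) :
    lineOf M1.R (f1 x) (f1 y) ≠ lineOf M1.R (f1 x') (f1 y') := by
  intro he
  apply h
  have h1 : f2 x' ∈ lineOf M2.R (f2 x) (f2 y) := by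
    rw [← line_transfer hf1 hf2 hx hy hx', he]; exact left_mem_lineOf
  have h2 : f2 y' ∈ lineOf M2.R (f2 x) (f2 y) := by
    rw [← line_transfer hf1 hf2 hx hy hy', he]; exact right_mem_lineOf
  exact (M2.line_unique ((f2_eq_iff hf2 hx hy).not.2 hxy) h1 h2
    ((f2_eq_iff hf2 hx' hy').not.2 hxy')).symm

include hf1 hf2 in
/-- A point of `M2` not coming from `M0` cannot lie on two glued lines whose
`M1`-sides differ. -/
lemma no_cross {x y x' y' : V0} {c0 : V2} (hx : x ∈ M0.carrier) (hy : y ∈ M0.carrier)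
    (hx' : x' ∈ M0.carrier) (hy' : y' ∈ M0.carrier) (hxy : x ≠ y) (hxy' : x' ≠ y')
    (hL : lineOf M1.R (f1 x) (f1 y) ≠ lineOf M1.R (f1 x') (f1 y'))
    (hc1 : c0 ∈ lineOf M2.R (f2 x) (f2 y)) (hc2 : c0 ∈ lineOf M2.R (f2 x') (f2 y'))
    (hc0 : ¬ InM0 M0 f2 c0) : False := by
  have hL2 := line2_ne_of_line1_ne hf1 hf2 hx hy hx' hy' hxy hxy' hL
  have hxy2 : f2 x ≠ f2 y := (f2_eq_iff hf2 hx hy).not.2 hxy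
  have hxy2' : f2 x' ≠ f2 y' := (f2_eq_iff hf2 hx' hy').not.2 hxy'
  have hc4 : c0 ∉ ({f2 x, f2 y, f2 x', f2 y'} : Set V2) := by
    intro hmem
    rcases hmem with h | h | h | h
    · exact hc0 ⟨x, hx, h.symm⟩
    · exact hc0 ⟨y, hy, h.symm⟩
    · exact hc0 ⟨x', hx', h.symm⟩
    · exact hc0 ⟨y', hy', h.symm⟩
  rcases M2.wedge_det (f2 x) (f2 y) (f2 x') (f2 y') (hf2.maps x hx) (hf2.maps y hy)
      (hf2.maps x' hx') (hf2.maps y' hy') with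
    ⟨_, _, _, hq1, hq2, _⟩ | ⟨_, hno⟩
  · set q := M2.wedge (f2 x) (f2 y) (f2 x') (f2 y') with hqdef
    have hq0 : q = f2 (M0.wedge x y x' y') := (hf2.wedge x hx y hy x' hx' y' hy').symm
    have hqc : q ≠ c0 := by
      intro h
      exact hc0 ⟨M0.wedge x y x' y', M0.wedge_mem x y x' y' hx hy hx' hy', by rw [← hq0, h]⟩
    have e1 : lineOf M2.R q c0 = lineOf M2.R (f2 x) (f2 y) :=
      M2.line_unique hxy2 hq1 hc1 hqc
    have e2 : lineOf M2.R q c0 = lineOf M2.R (f2 x') (f2 y') :=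
      M2.line_unique hxy2' hq2 hc2 hqc
    exact hL2 (e1.symm.trans e2)
  · exact hno ⟨c0, hxy2, hxy2', hL2, hc1, hc2, hc4⟩

include hf1 hf2 in
/-- A point of `M1` not coming from `M0` cannot lie on two glued lines whose
`M2`-sides differ. -/
lemma no_cross' {x y x' y' : V0} {w : V1} (hx : x ∈ M0.carrier) (hy : y ∈ M0.carrier)
    (hx' : x' ∈ M0.carrier) (hy' : y' ∈ M0.carrier) (hxy : x ≠ y) (hxy' : x' ≠ y')
    (hL : lineOf M2.R (f2 x) (f2 y) ≠ lineOf M2.R (f2 x') (f2 y'))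
    (hc1 : w ∈ lineOf M1.R (f1 x) (f1 y)) (hc2 : w ∈ lineOf M1.R (f1 x') (f1 y'))
    (hc0 : ¬ ∃ z, z ∈ M0.carrier ∧ f1 z = w) : False := by
  have hL1 := line1_ne_of_line2_ne hf1 hf2 hx hy hx' hy' hxy hxy' hL
  have hxy1 : f1 x ≠ f1 y := (f1_eq_iff hf1 hx hy).not.2 hxy
  have hxy1' : f1 x' ≠ f1 y' := (f1_eq_iff hf1 hx' hy').not.2 hxy'
  have hc4 : w ∉ ({f1 x, f1 y, f1 x', f1 y'} : Set V1) := by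
    intro hmem
    rcases hmem with h | h | h | h
    · exact hc0 ⟨x, hx, h.symm⟩
    · exact hc0 ⟨y, hy, h.symm⟩
    · exact hc0 ⟨x', hx', h.symm⟩
    · exact hc0 ⟨y', hy', h.symm⟩
  rcases M1.wedge_det (f1 x) (f1 y) (f1 x') (f1 y') (hf1.maps x hx) (hf1.maps y hy)
      (hf1.maps x' hx') (hf1.maps y' hy') with
    ⟨_, _, _, hq1, hq2, _⟩ | ⟨_, hno⟩
  · set q := M1.wedge (f1 x) (f1 y) (f1 x') (f1 y') with hqdef
    have hq0 : q = f1 (M0.wedge x y x' y') := (hf1.wedge x hx y hy x' hx' y' hy').symm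
    have hqc : q ≠ w := by
      intro h
      exact hc0 ⟨M0.wedge x y x' y', M0.wedge_mem x y x' y' hx hy hx' hy', by rw [← hq0, h]⟩
    have e1 : lineOf M1.R q w = lineOf M1.R (f1 x) (f1 y) :=
      M1.line_unique hxy1 hq1 hc1 hqc
    have e2 : lineOf M1.R q w = lineOf M1.R (f1 x') (f1 y') :=
      M1.line_unique hxy1' hq2 hc2 hqc
    exact hL1 (e1.symm.trans e2)
  · exact hno ⟨w, hxy1, hxy1', hL1, hc1, hc2, hc4⟩

end AmalgLemmas2
section AmalgExchange

variable {V0 V1 V2 : Type} {M0 : WM V0} {M1 : WM V1} {M2 : WM V2}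
  {f1 : V0 → V1} {f2 : V0 → V2}
  (hf1 : IsEmb M0 M1 f1) (hf2 : IsEmb M0 M2 f2)

lemma glue_cover {x y : V0} {u v w t : V1 ⊕ V2} (hx : x ∈ M0.carrier)
    (hy : y ∈ M0.carrier) (hxy : x ≠ y) (hu : OG M1 M2 f1 f2 x y u)
    (hv : OG M1 M2 f1 f2 x y v) (hw : OG M1 M2 f1 f2 x y w)
    (ht : OG M1 M2 f1 f2 x y t) :
    ∀ p q r, p ∈ ({u, v, w, t} : Set (V1 ⊕ V2)) → q ∈ ({u, v, w, t} : Set (V1 ⊕ V2)) →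
      r ∈ ({u, v, w, t} : Set (V1 ⊕ V2)) → Col M0 M1 M2 f1 f2 p q r := by
  have key : ∀ p, p ∈ ({u, v, w, t} : Set (V1 ⊕ V2)) → OG M1 M2 f1 f2 x y p := by
    rintro p (rfl | rfl | rfl | rfl)
    exacts [hu, hv, hw, ht]
  intro p q r hp hq hr
  exact Or.inr (Or.inr ⟨x, y, hx, hy, hxy, key p hp, key q hq, key r hr⟩)

lemma pure1_cover {a b c d : V1} (h : M1.R a b c) (h' : M1.R a b d) :
    ∀ p q r, p ∈ ({Sum.inl a, Sum.inl b, Sum.inl c, Sum.inl d} : Set (V1 ⊕ V2)) →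
      q ∈ ({Sum.inl a, Sum.inl b, Sum.inl c, Sum.inl d} : Set (V1 ⊕ V2)) →
      r ∈ ({Sum.inl a, Sum.inl b, Sum.inl c, Sum.inl d} : Set (V1 ⊕ V2)) →
      p ≠ q → p ≠ r → q ≠ r → Col M0 M1 M2 f1 f2 p q r := by
  have key : ∀ p, p ∈ ({Sum.inl a, Sum.inl b, Sum.inl c, Sum.inl d} : Set (V1 ⊕ V2)) →
      ∃ pa, p = Sum.inl pa ∧ pa ∈ ({a, b, c, d} : Set V1) := by
    rintro p (rfl | rfl | rfl | rfl)
    · exact ⟨a, rfl, by simp⟩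
    · exact ⟨b, rfl, by simp⟩
    · exact ⟨c, rfl, by simp⟩
    · exact ⟨d, rfl, by simp⟩
  intro p q r hp hq hr hpq hpr hqr
  obtain ⟨pa, rfl, hpa⟩ := key p hp
  obtain ⟨qa, rfl, hqa⟩ := key q hq
  obtain ⟨ra, rfl, hra⟩ := key r hr
  refine Or.inl ⟨pa, qa, ra, rfl, rfl, rfl, M1.exchange a b c d h h' pa qa ra hpa hqa hra ?_ ?_ ?_⟩
  · exact fun hh => hpq (by rw [hh])
  · exact fun hh => hpr (by rw [hh])
  · exact fun hh => hqr (by rw [hh])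

include hf1 hf2 in
lemma pure2_cover {a b c d : V2} {u v w t : V1 ⊕ V2} (hu : Rep M0 M2 f1 f2 u a)
    (hv : Rep M0 M2 f1 f2 v b) (hw : Rep M0 M2 f1 f2 w c) (ht : Rep M0 M2 f1 f2 t d)
    (h : M2.R a b c) (h' : M2.R a b d) :
    ∀ p q r, p ∈ ({u, v, w, t} : Set (V1 ⊕ V2)) → q ∈ ({u, v, w, t} : Set (V1 ⊕ V2)) →
      r ∈ ({u, v, w, t} : Set (V1 ⊕ V2)) → p ≠ q → p ≠ r → q ≠ r →
      Col M0 M1 M2 f1 f2 p q r := by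
  have key : ∀ p, p ∈ ({u, v, w, t} : Set (V1 ⊕ V2)) →
      ∃ pa, Rep M0 M2 f1 f2 p pa ∧ pa ∈ ({a, b, c, d} : Set V2) := by
    rintro p (rfl | rfl | rfl | rfl)
    · exact ⟨a, hu, by simp⟩
    · exact ⟨b, hv, by simp⟩
    · exact ⟨c, hw, by simp⟩
    · exact ⟨d, ht, by simp⟩
  intro p q r hp hq hr hpq hpr hqr
  obtain ⟨pa, hrp, hpa⟩ := key p hp
  obtain ⟨qa, hrq, hqa⟩ := key q hq
  obtain ⟨ra, hrr, hra⟩ := key r hr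
  refine Or.inr (Or.inl ⟨pa, qa, ra, hrp, hrq, hrr,
    M2.exchange a b c d h h' pa qa ra hpa hqa hra ?_ ?_ ?_⟩)
  · exact rep_ne hf1 hf2 hrp hrq hpq
  · exact rep_ne hf1 hf2 hrp hrr hpr
  · exact rep_ne hf1 hf2 hrq hrr hqr

include hf1 hf2 in
/-- Two glued lines through two common points coincide (on both sides). -/
lemma same_glue {x y x' y' : V0} {u v : V1 ⊕ V2} (hx : x ∈ M0.carrier)
    (hy : y ∈ M0.carrier) (hx' : x' ∈ M0.carrier) (hy' : y' ∈ M0.carrier)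
    (hxy : x ≠ y) (hxy' : x' ≠ y') (huv : u ≠ v)
    (hucar : u ∈ Car3 M0 M1 M2 f2) (hvcar : v ∈ Car3 M0 M1 M2 f2)
    (hu : OG M1 M2 f1 f2 x y u) (hv : OG M1 M2 f1 f2 x y v)
    (hu' : OG M1 M2 f1 f2 x' y' u) (hv' : OG M1 M2 f1 f2 x' y' v) :
    lineOf M1.R (f1 x) (f1 y) = lineOf M1.R (f1 x') (f1 y') ∧
    lineOf M2.R (f2 x) (f2 y) = lineOf M2.R (f2 x') (f2 y') := by
  have hxy1 : f1 x ≠ f1 y := (f1_eq_iff hf1 hx hy).not.2 hxy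
  have hxy1' : f1 x' ≠ f1 y' := (f1_eq_iff hf1 hx' hy').not.2 hxy'
  have hxy2 : f2 x ≠ f2 y := (f2_eq_iff hf2 hx hy).not.2 hxy
  have hxy2' : f2 x' ≠ f2 y' := (f2_eq_iff hf2 hx' hy').not.2 hxy'
  -- From equality of the `M1`-sides deduce equality of the `M2`-sides.
  have step12 : lineOf M1.R (f1 x) (f1 y) = lineOf M1.R (f1 x') (f1 y') →
      lineOf M2.R (f2 x) (f2 y) = lineOf M2.R (f2 x') (f2 y') := by
    intro he
    by_contra hne
    exact (line1_ne_of_line2_ne hf1 hf2 hx hy hx' hy' hxy hxy' hne) he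
  have step21 : lineOf M2.R (f2 x) (f2 y) = lineOf M2.R (f2 x') (f2 y') →
      lineOf M1.R (f1 x) (f1 y) = lineOf M1.R (f1 x') (f1 y') := by
    intro he
    by_contra hne
    exact (line2_ne_of_line1_ne hf1 hf2 hx hy hx' hy' hxy hxy' hne) he
  rcases hu with ⟨a, rfl, hac, hal⟩ | ⟨a, rfl, hac, hal⟩ <;>
    rcases hv with ⟨b, hvb, hbc, hbl⟩ | ⟨b, hvb, hbc, hbl⟩
  · -- u = inl a, v = inl b
    subst hvb
    have hab : a ≠ b := fun h => huv (by rw [h])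
    obtain ⟨a', ha', hac', hal'⟩ | ⟨a', ha', _, _⟩ := hu'
    swap
    · exact nomatch ha'
    obtain ⟨b', hb', hbc', hbl'⟩ | ⟨b', hb', _, _⟩ := hv'
    swap
    · exact nomatch hb'
    rw [show a' = a from (Sum.inl.inj ha').symm] at hal'
    rw [show b' = b from (Sum.inl.inj hb').symm] at hbl'
    have e1 : lineOf M1.R (f1 x) (f1 y) = lineOf M1.R (f1 x') (f1 y') := by
      rw [← M1.line_unique hxy1 hal hbl hab, ← M1.line_unique hxy1' hal' hbl' hab]
    exact ⟨e1, step12 e1⟩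
  · -- u = inl a, v = inr b : mixed case
    subst hvb
    by_cases he : lineOf M1.R (f1 x) (f1 y) = lineOf M1.R (f1 x') (f1 y')
    · exact ⟨he, step12 he⟩
    · exfalso
      obtain ⟨b', hb', hbc', hbl'⟩ | ⟨b', hb', hbc', hbl'⟩ := hv'
      · exact nomatch hb'
      rw [show b' = b from (Sum.inr.inj hb').symm] at hbl'
      have hbn : ¬ InM0 M0 f2 b := by
        rcases hvcar with ⟨z, _, hz⟩ | ⟨z, hz1, hz2⟩
        · exact nomatch hz
        · rw [show z = b from Sum.inr.inj hz2] at hz1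
          exact hz1.2
      exact no_cross hf1 hf2 hx hy hx' hy' hxy hxy' he hbl hbl' hbn
  · -- u = inr a, v = inl b : mixed case
    subst hvb
    by_cases he : lineOf M1.R (f1 x) (f1 y) = lineOf M1.R (f1 x') (f1 y')
    · exact ⟨he, step12 he⟩
    · exfalso
      obtain ⟨a', ha', hac', hal'⟩ | ⟨a', ha', hac', hal'⟩ := hu'
      · exact nomatch ha'
      rw [show a' = a from (Sum.inr.inj ha').symm] at hal'
      have han : ¬ InM0 M0 f2 a := by
        rcases hucar with ⟨z, _, hz⟩ | ⟨z, hz1, hz2⟩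
        · exact nomatch hz
        · rw [show z = a from Sum.inr.inj hz2] at hz1
          exact hz1.2
      exact no_cross hf1 hf2 hx hy hx' hy' hxy hxy' he hal hal' han
  · -- u = inr a, v = inr b
    subst hvb
    have hab : a ≠ b := fun h => huv (by rw [h])
    obtain ⟨a', ha', _, _⟩ | ⟨a', ha', hac', hal'⟩ := hu'
    · exact nomatch ha'
    obtain ⟨b', hb', _, _⟩ | ⟨b', hb', hbc', hbl'⟩ := hv'
    · exact nomatch hb'
    rw [show a' = a from (Sum.inr.inj ha').symm] at hal'
    rw [show b' = b from (Sum.inr.inj hb').symm] at hbl'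
    have e2 : lineOf M2.R (f2 x) (f2 y) = lineOf M2.R (f2 x') (f2 y') := by
      rw [← M2.line_unique hxy2 hal hbl hab, ← M2.line_unique hxy2' hal' hbl' hab]
    exact ⟨step21 e2, e2⟩

lemma OG_congr {x y x' y' : V0} {u : V1 ⊕ V2}
    (h1 : lineOf M1.R (f1 x) (f1 y) = lineOf M1.R (f1 x') (f1 y'))
    (h2 : lineOf M2.R (f2 x) (f2 y) = lineOf M2.R (f2 x') (f2 y'))
    (h : OG M1 M2 f1 f2 x' y' u) : OG M1 M2 f1 f2 x y u := by
  rcases h with ⟨a, rfl, hc, hl⟩ | ⟨a, rfl, hc, hl⟩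
  · exact Or.inl ⟨a, rfl, hc, h1 ▸ hl⟩
  · exact Or.inr ⟨a, rfl, hc, h2 ▸ hl⟩

end AmalgExchange
section AmalgColAll

variable {V0 V1 V2 : Type} {M0 : WM V0} {M1 : WM V1} {M2 : WM V2}
  {f1 : V0 → V1} {f2 : V0 → V2}
  (hf1 : IsEmb M0 M1 f1) (hf2 : IsEmb M0 M2 f2)

lemma OG_inl {x y : V0} {a : V1} (h : OG M1 M2 f1 f2 x y (Sum.inl a)) :
    a ∈ M1.carrier ∧ a ∈ lineOf M1.R (f1 x) (f1 y) := by
  rcases h with ⟨a', ha', hc, hl⟩ | ⟨a', ha', _, _⟩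
  · rw [show a = a' from Sum.inl.inj ha']; exact ⟨hc, hl⟩
  · exact nomatch ha'

/-- `Rep` of an `inl` point must come from `M0`. -/
lemma rep_inl {a : V1} {a2 : V2} (h : Rep M0 M2 f1 f2 (Sum.inl a) a2) :
    ∃ x, x ∈ M0.carrier ∧ a = f1 x ∧ a2 = f2 x := by
  rcases h with ⟨he, _, _⟩ | ⟨x, hx, he, rfl⟩
  · exact nomatch he
  · exact ⟨x, hx, Sum.inl.inj he, rfl⟩

include hf1 hf2 in
lemma col_all {u v w t : V1 ⊕ V2} (h1 : R3 M0 M1 M2 f1 f2 u v w)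
    (h2 : R3 M0 M1 M2 f1 f2 u v t) :
    ∀ p q r, p ∈ ({u, v, w, t} : Set (V1 ⊕ V2)) → q ∈ ({u, v, w, t} : Set (V1 ⊕ V2)) →
      r ∈ ({u, v, w, t} : Set (V1 ⊕ V2)) → p ≠ q → p ≠ r → q ≠ r →
      Col M0 M1 M2 f1 f2 p q r := by
  obtain ⟨hucar, hvcar, hwcar, huv, huw, hvw, hcol1⟩ := h1
  obtain ⟨-, -, htcar, -, hut, hvt, hcol2⟩ := h2
  intro p q r hp hq hr hpq hpr hqr
  rcases hcol1 with ⟨a, b, c, hua, hvb, hwc, hR⟩ | ⟨a, b, c, hua, hvb, hwc, hR⟩ |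
    ⟨x, y, hx, hy, hxy, hogu, hogv, hogw⟩
  · -- case 1 : u v w pure M1
    rcases hcol2 with ⟨a', b', d, hua', hvb', htd, hR'⟩ | ⟨a2, b2, d2, hua2, hvb2, htd2, hR'⟩ |
      ⟨x, y, hx, hy, hxy, hogu, hogv, hogt⟩
    · -- (1,1)
      subst hua hvb hwc htd
      rw [show a' = a from (Sum.inl.inj hua').symm] at hR'
      rw [show b' = b from (Sum.inl.inj hvb').symm] at hR'
      exact pure1_cover hR hR' p q r hp hq hr hpq hpr hqr
    · -- (1,2)
      subst hua hvb hwc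
      obtain ⟨x, hx, hax, ha2⟩ := rep_inl hua2
      obtain ⟨y, hy, hby, hb2⟩ := rep_inl hvb2
      subst hax hby ha2 hb2
      have hxy : x ≠ y := fun h => huv (by rw [h])
      refine glue_cover hx hy hxy ?_ ?_ ?_ ?_ p q r hp hq hr
      · exact Or.inl ⟨f1 x, rfl, hf1.maps x hx, left_mem_lineOf⟩
      · exact Or.inl ⟨f1 y, rfl, hf1.maps y hy, right_mem_lineOf⟩
      · exact Or.inl ⟨c, rfl, (M1.R_mem _ _ _ hR).2.2, mem_lineOf.2 (Or.inr (Or.inr hR))⟩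
      · exact rep_OG hf1 hf2 hx hy htd2 (mem_lineOf.2 (Or.inr (Or.inr hR')))
    · -- (1,3)
      subst hua hvb hwc
      obtain ⟨hac, hal⟩ := OG_inl hogu
      obtain ⟨hbc, hbl⟩ := OG_inl hogv
      have hab : a ≠ b := fun h => huv (by rw [h])
      have hxy1 : f1 x ≠ f1 y := (f1_eq_iff hf1 hx hy).not.2 hxy
      have hline : lineOf M1.R a b = lineOf M1.R (f1 x) (f1 y) :=
        M1.line_unique hxy1 hal hbl hab
      refine glue_cover hx hy hxy hogu hogv ?_ hogt p q r hp hq hr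
      exact Or.inl ⟨c, rfl, (M1.R_mem _ _ _ hR).2.2,
        hline ▸ mem_lineOf.2 (Or.inr (Or.inr hR))⟩
  · -- case 2 : u v w have M2-representatives
    rcases hcol2 with ⟨a1, b1, d1, hua1, hvb1, htd1, hR'⟩ | ⟨a2, b2, d2, hua2, hvb2, htd2, hR'⟩ |
      ⟨x, y, hx, hy, hxy, hogu, hogv, hogt⟩
    · -- (2,1)
      subst hua1 hvb1 htd1
      obtain ⟨x, hx, hax, ha2⟩ := rep_inl hua
      obtain ⟨y, hy, hby, hb2⟩ := rep_inl hvb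
      subst hax hby ha2 hb2
      have hxy : x ≠ y := fun h => huv (by rw [h])
      refine glue_cover hx hy hxy ?_ ?_ ?_ ?_ p q r hp hq hr
      · exact Or.inl ⟨f1 x, rfl, hf1.maps x hx, left_mem_lineOf⟩
      · exact Or.inl ⟨f1 y, rfl, hf1.maps y hy, right_mem_lineOf⟩
      · exact rep_OG hf1 hf2 hx hy hwc (mem_lineOf.2 (Or.inr (Or.inr hR)))
      · exact Or.inl ⟨d1, rfl, (M1.R_mem _ _ _ hR').2.2, mem_lineOf.2 (Or.inr (Or.inr hR'))⟩
    · -- (2,2)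
      rw [rep_unique hf1 hf2 hua2 hua, rep_unique hf1 hf2 hvb2 hvb] at hR'
      exact pure2_cover hf1 hf2 hua hvb hwc htd2 hR hR' p q r hp hq hr hpq hpr hqr
    · -- (2,3)
      have hal : a ∈ lineOf M2.R (f2 x) (f2 y) := OG_rep hf1 hf2 hx hy hogu hua
      have hbl : b ∈ lineOf M2.R (f2 x) (f2 y) := OG_rep hf1 hf2 hx hy hogv hvb
      have hab : a ≠ b := rep_ne hf1 hf2 hua hvb huv
      have hxy2 : f2 x ≠ f2 y := (f2_eq_iff hf2 hx hy).not.2 hxy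
      have hline : lineOf M2.R a b = lineOf M2.R (f2 x) (f2 y) :=
        M2.line_unique hxy2 hal hbl hab
      refine glue_cover hx hy hxy hogu hogv ?_ hogt p q r hp hq hr
      exact rep_OG hf1 hf2 hx hy hwc (hline ▸ mem_lineOf.2 (Or.inr (Or.inr hR)))
  · -- case 3 : u v w on a glued line
    rcases hcol2 with ⟨a, b, d, hua, hvb, htd, hR'⟩ | ⟨a2, b2, d2, hua2, hvb2, htd2, hR'⟩ |
      ⟨x', y', hx', hy', hxy', hogu', hogv', hogt⟩
    · -- (3,1)
      subst hua hvb htd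
      obtain ⟨hac, hal⟩ := OG_inl hogu
      obtain ⟨hbc, hbl⟩ := OG_inl hogv
      have hab : a ≠ b := fun h => huv (by rw [h])
      have hxy1 : f1 x ≠ f1 y := (f1_eq_iff hf1 hx hy).not.2 hxy
      have hline : lineOf M1.R a b = lineOf M1.R (f1 x) (f1 y) :=
        M1.line_unique hxy1 hal hbl hab
      refine glue_cover hx hy hxy hogu hogv hogw ?_ p q r hp hq hr
      exact Or.inl ⟨d, rfl, (M1.R_mem _ _ _ hR').2.2,
        hline ▸ mem_lineOf.2 (Or.inr (Or.inr hR'))⟩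
    · -- (3,2)
      have hal : a2 ∈ lineOf M2.R (f2 x) (f2 y) := OG_rep hf1 hf2 hx hy hogu hua2
      have hbl : b2 ∈ lineOf M2.R (f2 x) (f2 y) := OG_rep hf1 hf2 hx hy hogv hvb2
      have hab : a2 ≠ b2 := rep_ne hf1 hf2 hua2 hvb2 huv
      have hxy2 : f2 x ≠ f2 y := (f2_eq_iff hf2 hx hy).not.2 hxy
      have hline : lineOf M2.R a2 b2 = lineOf M2.R (f2 x) (f2 y) :=
        M2.line_unique hxy2 hal hbl hab
      refine glue_cover hx hy hxy hogu hogv hogw ?_ p q r hp hq hr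
      exact rep_OG hf1 hf2 hx hy htd2 (hline ▸ mem_lineOf.2 (Or.inr (Or.inr hR')))
    · -- (3,3)
      obtain ⟨e1, e2⟩ := same_glue hf1 hf2 hx hy hx' hy' hxy hxy' huv hucar hvcar
        hogu hogv hogu' hogv'
      refine glue_cover hx hy hxy hogu hogv hogw (OG_congr e1 e2 hogt) p q r hp hq hr

end AmalgColAll
section AmalgM3

variable {V0 V1 V2 : Type} {M0 : WM V0} {M1 : WM V1} {M2 : WM V2}
  {f1 : V0 → V1} {f2 : V0 → V2}

/-- The amalgam of `M1` and `M2` over `M0`. -/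
noncomputable def M3 (M0 : WM V0) (M1 : WM V1) (M2 : WM V2) (f1 : V0 → V1) (f2 : V0 → V2)
    (hf1 : IsEmb M0 M1 f1) (hf2 : IsEmb M0 M2 f2) : WM (V1 ⊕ V2) where
  carrier := Car3 M0 M1 M2 f2
  R := R3 M0 M1 M2 f1 f2
  wedge := wedge3 M0 M1 M2 f1 f2
  R_mem := fun a b c h => ⟨h.1, h.2.1, h.2.2.1⟩
  wedge_mem := by
    intro a b c d ha hb hc hd
    unfold wedge3
    split
    · next h =>
      obtain ⟨-, -, -, hm, -, hnot⟩ := h.choose_spec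
      rcases mem_lineOf.1 hm with he | he | hr
      · rw [he]; exact ha
      · rw [he]; exact hb
      · exact hr.2.2.1
    · exact ha
  irrefl := fun a b c h => ⟨h.2.2.2.1, h.2.2.2.2.1, h.2.2.2.2.2.1⟩
  symm_swap := by
    intro a b c h
    obtain ⟨h1, h2, h3, h4, h5, h6, h7⟩ := h
    exact ⟨h2, h1, h3, h4.symm, h6, h5, col_swap h7⟩
  symm_rot := by
    intro a b c h
    obtain ⟨h1, h2, h3, h4, h5, h6, h7⟩ := h
    exact ⟨h2, h3, h1, h6, h4.symm, h5.symm, col_rot h7⟩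
  exchange := by
    intro a b c d h1 h2 x y z hx hy hz hxy hxz hyz
    have hcar : ∀ p, p ∈ ({a, b, c, d} : Set (V1 ⊕ V2)) → p ∈ Car3 M0 M1 M2 f2 := by
      rintro p (rfl | rfl | rfl | rfl)
      exacts [h1.1, h1.2.1, h1.2.2.1, h2.2.2.1]
    exact ⟨hcar x hx, hcar y hy, hcar z hz, hxy, hxz, hyz,
      col_all hf1 hf2 h1 h2 x y z hx hy hz hxy hxz hyz⟩
  wedge_det := by
    intro a b c d ha hb hc hd
    unfold wedge3
    split
    · next h =>
      obtain ⟨he1, he2, he3, he4, he5, he6⟩ := h.choose_spec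
      exact Or.inl ⟨he1, he2, he3, he4, he5, he6⟩
    · next h => exact Or.inr ⟨rfl, h⟩

end AmalgM3
section AmalgRel

variable {V0 V1 V2 : Type} {M0 : WM V0} {M1 : WM V1} {M2 : WM V2}
  {f1 : V0 → V1} {f2 : V0 → V2}
  (hf1 : IsEmb M0 M1 f1) (hf2 : IsEmb M0 M2 f2)

include hf1 hf2 in
lemma col_inl {a b c : V1} (hab : a ≠ b) (hac : a ≠ c) (hbc : b ≠ c)
    (h : Col M0 M1 M2 f1 f2 (Sum.inl a) (Sum.inl b) (Sum.inl c)) : M1.R a b c := by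
  rcases h with ⟨a', b', c', ha, hb, hc, hR⟩ | ⟨a2, b2, c2, ha, hb, hc, hR⟩ |
    ⟨x, y, hx, hy, hxy, hoga, hogb, hogc⟩
  · rw [show a' = a from (Sum.inl.inj ha).symm, show b' = b from (Sum.inl.inj hb).symm,
      show c' = c from (Sum.inl.inj hc).symm] at hR
    exact hR
  · obtain ⟨x, hx, hax, ha2⟩ := rep_inl ha
    obtain ⟨y, hy, hby, hb2⟩ := rep_inl hb
    obtain ⟨z, hz, hcz, hc2⟩ := rep_inl hc
    subst hax hby hcz ha2 hb2 hc2
    exact (rel_transfer hf1 hf2 hx hy hz).2 hR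
  · obtain ⟨-, hal⟩ := OG_inl hoga
    obtain ⟨-, hbl⟩ := OG_inl hogb
    obtain ⟨-, hcl⟩ := OG_inl hogc
    exact M1.three_on_line ((f1_eq_iff hf1 hx hy).not.2 hxy) hal hbl hcl hab hac hbc

include hf1 hf2 in
lemma rel_inl {a b c : V1} (ha : a ∈ M1.carrier) (hb : b ∈ M1.carrier) (hc : c ∈ M1.carrier) :
    M1.R a b c ↔ R3 M0 M1 M2 f1 f2 (Sum.inl a) (Sum.inl b) (Sum.inl c) := by
  constructor
  · intro h
    obtain ⟨hab, hac, hbc⟩ := M1.irrefl a b c h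
    exact ⟨Or.inl ⟨a, ha, rfl⟩, Or.inl ⟨b, hb, rfl⟩, Or.inl ⟨c, hc, rfl⟩,
      by simpa using hab, by simpa using hac, by simpa using hbc,
      Or.inl ⟨a, b, c, rfl, rfl, rfl, h⟩⟩
  · intro h
    obtain ⟨-, -, -, hab, hac, hbc, hcol⟩ := h
    exact col_inl hf1 hf2 (fun e => hab (by rw [e])) (fun e => hac (by rw [e]))
      (fun e => hbc (by rw [e])) hcol

include hf1 hf2 in
lemma col_reps {u v w : V1 ⊕ V2} {a b c : V2} (hua : Rep M0 M2 f1 f2 u a)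
    (hvb : Rep M0 M2 f1 f2 v b) (hwc : Rep M0 M2 f1 f2 w c)
    (huv : u ≠ v) (huw : u ≠ w) (hvw : v ≠ w)
    (h : Col M0 M1 M2 f1 f2 u v w) : M2.R a b c := by
  rcases h with ⟨a1, b1, c1, hu1, hv1, hw1, hR⟩ | ⟨a2, b2, c2, ha2, hb2, hc2, hR⟩ |
    ⟨x, y, hx, hy, hxy, hoga, hogb, hogc⟩
  · subst hu1 hv1 hw1
    obtain ⟨x, hx, hax, ha2⟩ := rep_inl hua
    obtain ⟨y, hy, hby, hb2⟩ := rep_inl hvb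
    obtain ⟨z, hz, hcz, hc2⟩ := rep_inl hwc
    subst hax hby hcz ha2 hb2 hc2
    exact (rel_transfer hf1 hf2 hx hy hz).1 hR
  · rw [rep_unique hf1 hf2 hua ha2, rep_unique hf1 hf2 hvb hb2, rep_unique hf1 hf2 hwc hc2]
    exact hR
  · exact M2.three_on_line ((f2_eq_iff hf2 hx hy).not.2 hxy)
      (OG_rep hf1 hf2 hx hy hoga hua) (OG_rep hf1 hf2 hx hy hogb hvb)
      (OG_rep hf1 hf2 hx hy hogc hwc) (rep_ne hf1 hf2 hua hvb huv)
      (rep_ne hf1 hf2 hua hwc huw) (rep_ne hf1 hf2 hvb hwc hvw)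

include hf1 hf2 in
lemma rel_gg2 {a b c : V2} (ha : a ∈ M2.carrier) (hb : b ∈ M2.carrier) (hc : c ∈ M2.carrier) :
    M2.R a b c ↔
      R3 M0 M1 M2 f1 f2 (gg2 M0 f1 f2 a) (gg2 M0 f1 f2 b) (gg2 M0 f1 f2 c) := by
  have hge : ∀ x y : V2, x ∈ M2.carrier → y ∈ M2.carrier → x ≠ y →
      gg2 M0 f1 f2 x ≠ gg2 M0 f1 f2 y := fun x y hx hy hne he =>
    hne (gg2_inj hf1 hf2 hx hy he)
  constructor
  · intro h
    obtain ⟨hab, hac, hbc⟩ := M2.irrefl a b c h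
    exact ⟨gg2_car3 hf1 hf2 ha, gg2_car3 hf1 hf2 hb, gg2_car3 hf1 hf2 hc,
      hge a b ha hb hab, hge a c ha hc hac, hge b c hb hc hbc,
      Or.inr (Or.inl ⟨a, b, c, rep_gg2 hf2 ha, rep_gg2 hf2 hb, rep_gg2 hf2 hc, h⟩)⟩
  · intro h
    obtain ⟨-, -, -, hab, hac, hbc, hcol⟩ := h
    exact col_reps hf1 hf2 (rep_gg2 hf2 ha) (rep_gg2 hf2 hb) (rep_gg2 hf2 hc) hab hac hbc hcol

end AmalgRel
section AmalgLines3

variable {V0 V1 V2 : Type} {M0 : WM V0} {M1 : WM V1} {M2 : WM V2}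
  {f1 : V0 → V1} {f2 : V0 → V2}
  (hf1 : IsEmb M0 M1 f1) (hf2 : IsEmb M0 M2 f2)

include hf1 hf2 in
lemma line3_inl_mem {a b z : V1} (ha : a ∈ M1.carrier) (hb : b ∈ M1.carrier) (hab : a ≠ b) :
    Sum.inl z ∈ lineOf (R3 M0 M1 M2 f1 f2) (Sum.inl a) (Sum.inl b) ↔
      z ∈ lineOf M1.R a b := by
  constructor
  · intro h
    rcases mem_lineOf.1 h with he | he | hr
    · rw [Sum.inl.inj he]; exact left_mem_lineOf
    · rw [Sum.inl.inj he]; exact right_mem_lineOf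
    · obtain ⟨-, -, -, h1, h2, h3, hcol⟩ := hr
      exact mem_lineOf.2 (Or.inr (Or.inr (col_inl hf1 hf2 (fun e => h1 (by rw [e]))
        (fun e => h2 (by rw [e])) (fun e => h3 (by rw [e])) hcol)))
  · intro h
    rcases mem_lineOf.1 h with rfl | rfl | hr
    · exact left_mem_lineOf
    · exact right_mem_lineOf
    · exact mem_lineOf.2 (Or.inr (Or.inr
        ((rel_inl hf1 hf2 ha hb (M1.R_mem _ _ _ hr).2.2).1 hr)))

include hf1 hf2 in
lemma line3_inr_mem {a b : V1} {c0 : V2} (ha : a ∈ M1.carrier) (hb : b ∈ M1.carrier)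
    (hab : a ≠ b) :
    Sum.inr c0 ∈ lineOf (R3 M0 M1 M2 f1 f2) (Sum.inl a) (Sum.inl b) ↔
      (c0 ∈ M2.carrier ∧ ¬ InM0 M0 f2 c0 ∧ ∃ x y, x ∈ M0.carrier ∧ y ∈ M0.carrier ∧
        x ≠ y ∧ a ∈ lineOf M1.R (f1 x) (f1 y) ∧ b ∈ lineOf M1.R (f1 x) (f1 y) ∧
        c0 ∈ lineOf M2.R (f2 x) (f2 y)) := by
  constructor
  · intro h
    rcases mem_lineOf.1 h with he | he | hr
    · exact nomatch he
    · exact nomatch he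
    · obtain ⟨-, -, hcar, -, -, -, hcol⟩ := hr
      have hc0 : c0 ∈ M2.carrier ∧ ¬ InM0 M0 f2 c0 := by
        rcases hcar with ⟨z, _, hz⟩ | ⟨z, hz1, hz2⟩
        · exact nomatch hz
        · rw [show z = c0 from Sum.inr.inj hz2] at hz1; exact hz1
      refine ⟨hc0.1, hc0.2, ?_⟩
      rcases hcol with ⟨a1, b1, c1, -, -, hc1, -⟩ | ⟨a2, b2, c2, ha2, hb2, hc2, hR⟩ |
        ⟨x, y, hx, hy, hxy, hoga, hogb, hogc⟩
      · exact nomatch hc1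
      · obtain ⟨x, hx, hax, ha2'⟩ := rep_inl ha2
        obtain ⟨y, hy, hby, hb2'⟩ := rep_inl hb2
        have hc2' : c2 = c0 := by
          rcases hc2 with ⟨he, -, -⟩ | ⟨z, -, he, -⟩
          · exact (Sum.inr.inj he).symm
          · exact nomatch he
        subst hax hby ha2' hb2' hc2'
        refine ⟨x, y, hx, hy, fun e => hab (by rw [e]), left_mem_lineOf, right_mem_lineOf,
          mem_lineOf.2 (Or.inr (Or.inr hR))⟩
      · obtain ⟨-, hal⟩ := OG_inl hoga
        obtain ⟨-, hbl⟩ := OG_inl hogb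
        have hcl : c0 ∈ lineOf M2.R (f2 x) (f2 y) := by
          rcases hogc with ⟨z, hz, -, -⟩ | ⟨z, hz, -, hl⟩
          · exact nomatch hz
          · rwa [show z = c0 from (Sum.inr.inj hz).symm] at hl
        exact ⟨x, y, hx, hy, hxy, hal, hbl, hcl⟩
  · rintro ⟨hc1, hc2, x, y, hx, hy, hxy, hal, hbl, hcl⟩
    refine mem_lineOf.2 (Or.inr (Or.inr ⟨Or.inl ⟨a, ha, rfl⟩, Or.inl ⟨b, hb, rfl⟩,
      Or.inr ⟨c0, ⟨hc1, hc2⟩, rfl⟩, by simpa using hab, by simp, by simp,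
      Or.inr (Or.inr ⟨x, y, hx, hy, hxy, Or.inl ⟨a, rfl, ha, hal⟩,
        Or.inl ⟨b, rfl, hb, hbl⟩, Or.inr ⟨c0, rfl, hc1, hcl⟩⟩)⟩))

include hf1 hf2 in
lemma line3_inl_eq {a b c d : V1} (ha : a ∈ M1.carrier) (hb : b ∈ M1.carrier)
    (hc : c ∈ M1.carrier) (hd : d ∈ M1.carrier) (hab : a ≠ b) (hcd : c ≠ d)
    (h : lineOf M1.R a b = lineOf M1.R c d) :
    lineOf (R3 M0 M1 M2 f1 f2) (Sum.inl a) (Sum.inl b) =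
      lineOf (R3 M0 M1 M2 f1 f2) (Sum.inl c) (Sum.inl d) := by
  have key : ∀ x y : V0, x ∈ M0.carrier → y ∈ M0.carrier → x ≠ y →
      a ∈ lineOf M1.R (f1 x) (f1 y) → b ∈ lineOf M1.R (f1 x) (f1 y) →
      c ∈ lineOf M1.R (f1 x) (f1 y) ∧ d ∈ lineOf M1.R (f1 x) (f1 y) := by
    intro x y hx hy hxy hal hbl
    have he : lineOf M1.R a b = lineOf M1.R (f1 x) (f1 y) :=
      M1.line_unique ((f1_eq_iff hf1 hx hy).not.2 hxy) hal hbl hab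
    rw [← he, h]
    exact ⟨left_mem_lineOf, right_mem_lineOf⟩
  have key' : ∀ x y : V0, x ∈ M0.carrier → y ∈ M0.carrier → x ≠ y →
      c ∈ lineOf M1.R (f1 x) (f1 y) → d ∈ lineOf M1.R (f1 x) (f1 y) →
      a ∈ lineOf M1.R (f1 x) (f1 y) ∧ b ∈ lineOf M1.R (f1 x) (f1 y) := by
    intro x y hx hy hxy hal hbl
    have he : lineOf M1.R c d = lineOf M1.R (f1 x) (f1 y) :=
      M1.line_unique ((f1_eq_iff hf1 hx hy).not.2 hxy) hal hbl hcd
    rw [← he, ← h]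
    exact ⟨left_mem_lineOf, right_mem_lineOf⟩
  ext u
  rcases u with z | z
  · rw [line3_inl_mem hf1 hf2 ha hb hab, line3_inl_mem hf1 hf2 hc hd hcd, h]
  · rw [line3_inr_mem hf1 hf2 ha hb hab, line3_inr_mem hf1 hf2 hc hd hcd]
    constructor
    · rintro ⟨h1, h2, x, y, hx, hy, hxy, hal, hbl, hcl⟩
      obtain ⟨hcl', hdl'⟩ := key x y hx hy hxy hal hbl
      exact ⟨h1, h2, x, y, hx, hy, hxy, hcl', hdl', hcl⟩
    · rintro ⟨h1, h2, x, y, hx, hy, hxy, hal, hbl, hcl⟩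
      obtain ⟨hal', hbl'⟩ := key' x y hx hy hxy hal hbl
      exact ⟨h1, h2, x, y, hx, hy, hxy, hal', hbl', hcl⟩

include hf1 hf2 in
lemma line3_inl_ne {a b c d : V1} (ha : a ∈ M1.carrier) (hb : b ∈ M1.carrier)
    (hc : c ∈ M1.carrier) (hd : d ∈ M1.carrier) (hab : a ≠ b) (hcd : c ≠ d)
    (h : lineOf M1.R a b ≠ lineOf M1.R c d) :
    lineOf (R3 M0 M1 M2 f1 f2) (Sum.inl a) (Sum.inl b) ≠
      lineOf (R3 M0 M1 M2 f1 f2) (Sum.inl c) (Sum.inl d) := by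
  intro he
  apply h
  ext z
  rw [← line3_inl_mem hf1 hf2 ha hb hab, ← line3_inl_mem hf1 hf2 hc hd hcd, he]

include hf1 hf2 in
/-- Any point on two distinct amalgam lines spanned by `M1`-points is an `M1`-point. -/
lemma cross_pt_inl {a b c d : V1} {p' : V1 ⊕ V2} (ha : a ∈ M1.carrier)
    (hb : b ∈ M1.carrier) (hc : c ∈ M1.carrier) (hd : d ∈ M1.carrier)
    (hab : a ≠ b) (hcd : c ≠ d) (hlne : lineOf M1.R a b ≠ lineOf M1.R c d)
    (hp1 : p' ∈ lineOf (R3 M0 M1 M2 f1 f2) (Sum.inl a) (Sum.inl b))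
    (hp2 : p' ∈ lineOf (R3 M0 M1 M2 f1 f2) (Sum.inl c) (Sum.inl d)) :
    ∃ q, p' = Sum.inl q ∧ q ∈ lineOf M1.R a b ∧ q ∈ lineOf M1.R c d := by
  rcases p' with q | c0
  · exact ⟨q, rfl, (line3_inl_mem hf1 hf2 ha hb hab).1 hp1,
      (line3_inl_mem hf1 hf2 hc hd hcd).1 hp2⟩
  · exfalso
    obtain ⟨hm2, hni, x, y, hx, hy, hxy, hal, hbl, hcl⟩ :=
      (line3_inr_mem hf1 hf2 ha hb hab).1 hp1
    obtain ⟨-, -, x', y', hx', hy', hxy', hcl', hdl', hcl2⟩ :=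
      (line3_inr_mem hf1 hf2 hc hd hcd).1 hp2
    have e1 : lineOf M1.R a b = lineOf M1.R (f1 x) (f1 y) :=
      M1.line_unique ((f1_eq_iff hf1 hx hy).not.2 hxy) hal hbl hab
    have e2 : lineOf M1.R c d = lineOf M1.R (f1 x') (f1 y') :=
      M1.line_unique ((f1_eq_iff hf1 hx' hy').not.2 hxy') hcl' hdl' hcd
    exact no_cross hf1 hf2 hx hy hx' hy' hxy hxy' (by rw [← e1, ← e2]; exact hlne)
      hcl hcl2 hni

include hf1 hf2 in
lemma g1_wedge {a b c d : V1} (ha : a ∈ M1.carrier) (hb : b ∈ M1.carrier)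
    (hc : c ∈ M1.carrier) (hd : d ∈ M1.carrier) :
    Sum.inl (M1.wedge a b c d) =
      wedge3 M0 M1 M2 f1 f2 (Sum.inl a) (Sum.inl b) (Sum.inl c) (Sum.inl d) := by
  rcases M1.wedge_det a b c d ha hb hc hd with
    ⟨hab, hcd, hlne, hm1, hm2, hout⟩ | ⟨heq, hno⟩
  · set p := M1.wedge a b c d with hp
    have hpc : p ∈ M1.carrier := M1.wedge_mem a b c d ha hb hc hd
    have hlne3 := line3_inl_ne hf1 hf2 ha hb hc hd hab hcd hlne
    have hPex : ∃ p' : V1 ⊕ V2, (Sum.inl a : V1 ⊕ V2) ≠ Sum.inl b ∧ (Sum.inl c : V1 ⊕ V2) ≠ Sum.inl d ∧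
        lineOf (R3 M0 M1 M2 f1 f2) (Sum.inl a) (Sum.inl b) ≠
          lineOf (R3 M0 M1 M2 f1 f2) (Sum.inl c) (Sum.inl d) ∧
        p' ∈ lineOf (R3 M0 M1 M2 f1 f2) (Sum.inl a) (Sum.inl b) ∧
        p' ∈ lineOf (R3 M0 M1 M2 f1 f2) (Sum.inl c) (Sum.inl d) ∧
        p' ∉ ({Sum.inl a, Sum.inl b, Sum.inl c, Sum.inl d} : Set (V1 ⊕ V2)) := by
      refine ⟨Sum.inl p, by simpa using hab, by simpa using hcd, hlne3,
        (line3_inl_mem hf1 hf2 ha hb hab).2 hm1,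
        (line3_inl_mem hf1 hf2 hc hd hcd).2 hm2, ?_⟩
      intro hmem
      apply hout
      rcases hmem with h | h | h | h
      · exact Or.inl (Sum.inl.inj h)
      · exact Or.inr (Or.inl (Sum.inl.inj h))
      · exact Or.inr (Or.inr (Or.inl (Sum.inl.inj h)))
      · exact Or.inr (Or.inr (Or.inr (Sum.inl.inj h)))
    rw [wedge3, dif_pos hPex]
    obtain ⟨-, -, -, hq1, hq2, hq4⟩ := hPex.choose_spec
    obtain ⟨q, hqe, hqm1, hqm2⟩ := cross_pt_inl hf1 hf2 ha hb hc hd hab hcd hlne hq1 hq2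
    rw [hqe]
    by_cases hqp : q = p
    · rw [hqp]
    · exfalso
      have e1 : lineOf M1.R q p = lineOf M1.R a b := M1.line_unique hab hqm1 hm1 hqp
      have e2 : lineOf M1.R q p = lineOf M1.R c d := M1.line_unique hcd hqm2 hm2 hqp
      exact hlne (e1.symm.trans e2)
  · have hPne : ¬ ∃ p' : V1 ⊕ V2, (Sum.inl a : V1 ⊕ V2) ≠ Sum.inl b ∧ (Sum.inl c : V1 ⊕ V2) ≠ Sum.inl d ∧
        lineOf (R3 M0 M1 M2 f1 f2) (Sum.inl a) (Sum.inl b) ≠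
          lineOf (R3 M0 M1 M2 f1 f2) (Sum.inl c) (Sum.inl d) ∧
        p' ∈ lineOf (R3 M0 M1 M2 f1 f2) (Sum.inl a) (Sum.inl b) ∧
        p' ∈ lineOf (R3 M0 M1 M2 f1 f2) (Sum.inl c) (Sum.inl d) ∧
        p' ∉ ({Sum.inl a, Sum.inl b, Sum.inl c, Sum.inl d} : Set (V1 ⊕ V2)) := by
      rintro ⟨p', hab3, hcd3, hlne3, hp1, hp2, hout'⟩
      have hab : a ≠ b := fun e => hab3 (by rw [e])
      have hcd : c ≠ d := fun e => hcd3 (by rw [e])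
      have hlne : lineOf M1.R a b ≠ lineOf M1.R c d := by
        intro he
        exact hlne3 (line3_inl_eq hf1 hf2 ha hb hc hd hab hcd he)
      obtain ⟨q, rfl, hqm1, hqm2⟩ := cross_pt_inl hf1 hf2 ha hb hc hd hab hcd hlne hp1 hp2
      refine hno ⟨q, hab, hcd, hlne, hqm1, hqm2, ?_⟩
      intro hmem
      apply hout'
      simp only [Set.mem_insert_iff, Set.mem_singleton_iff] at hmem ⊢
      rcases hmem with h | h | h | h <;> rw [h] <;> simp
    rw [wedge3, dif_neg hPne, heq]

end AmalgLines3
section AmalgLines3b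

variable {V0 V1 V2 : Type} {M0 : WM V0} {M1 : WM V1} {M2 : WM V2}
  {f1 : V0 → V1} {f2 : V0 → V2}
  (hf1 : IsEmb M0 M1 f1) (hf2 : IsEmb M0 M2 f2)

lemma car3_inr {c0 : V2} (h : Sum.inr c0 ∈ Car3 M0 M1 M2 f2) :
    c0 ∈ M2.carrier ∧ ¬ InM0 M0 f2 c0 := by
  rcases h with ⟨z, _, hz⟩ | ⟨z, hz1, hz2⟩
  · exact nomatch hz
  · rwa [show z = c0 from Sum.inr.inj hz2] at hz1

lemma car3_inl {a : V1} (h : Sum.inl a ∈ Car3 M0 M1 M2 f2) : a ∈ M1.carrier := by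
  rcases h with ⟨z, hz1, hz2⟩ | ⟨z, _, hz⟩
  · rwa [show z = a from Sum.inl.inj hz2] at hz1
  · exact nomatch hz

lemma line3_mem_car3 {u v w : V1 ⊕ V2} (hv : v ∈ Car3 M0 M1 M2 f2)
    (hw : w ∈ Car3 M0 M1 M2 f2) (h : u ∈ lineOf (R3 M0 M1 M2 f1 f2) v w) :
    u ∈ Car3 M0 M1 M2 f2 := by
  rcases mem_lineOf.1 h with rfl | rfl | hr
  · exact hv
  · exact hw
  · exact hr.2.2.1

lemma gg2_inl_form {a : V2} {a1 : V1} (h : gg2 M0 f1 f2 a = Sum.inl a1) :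
    ∃ x, x ∈ M0.carrier ∧ f2 x = a ∧ f1 x = a1 := by
  unfold gg2 at h
  split at h
  · next hin => exact ⟨hin.choose, hin.choose_spec.1, hin.choose_spec.2, Sum.inl.inj h⟩
  · exact nomatch h

lemma gg2_ne_inl {a : V2} {w1 : V1} (hw : ¬ ∃ z, z ∈ M0.carrier ∧ f1 z = w1) :
    gg2 M0 f1 f2 a ≠ Sum.inl w1 := by
  intro h
  obtain ⟨x, hx, -, hfx⟩ := gg2_inl_form h
  exact hw ⟨x, hx, hfx⟩

include hf1 hf2 in
lemma line3_rep_mem {a b r : V2} {u : V1 ⊕ V2} (ha : a ∈ M2.carrier)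
    (hb : b ∈ M2.carrier) (hab : a ≠ b) (hur : Rep M0 M2 f1 f2 u r) :
    u ∈ lineOf (R3 M0 M1 M2 f1 f2) (gg2 M0 f1 f2 a) (gg2 M0 f1 f2 b) ↔
      r ∈ lineOf M2.R a b := by
  constructor
  · intro h
    rcases mem_lineOf.1 h with he | he | hr3
    · rw [rep_unique hf1 hf2 hur (he.symm ▸ rep_gg2 hf2 ha : Rep M0 M2 f1 f2 u a)]
      exact left_mem_lineOf
    · rw [rep_unique hf1 hf2 hur (he.symm ▸ rep_gg2 hf2 hb : Rep M0 M2 f1 f2 u b)]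
      exact right_mem_lineOf
    · obtain ⟨-, -, -, h1, h2, h3, hcol⟩ := hr3
      exact mem_lineOf.2 (Or.inr (Or.inr
        (col_reps hf1 hf2 (rep_gg2 hf2 ha) (rep_gg2 hf2 hb) hur h1 h2 h3 hcol)))
  · intro h
    rcases mem_lineOf.1 h with rfl | rfl | hr
    · rw [rep_inj hf2 hur (rep_gg2 hf2 ha)]; exact left_mem_lineOf
    · rw [rep_inj hf2 hur (rep_gg2 hf2 hb)]; exact right_mem_lineOf
    · refine mem_lineOf.2 (Or.inr (Or.inr ⟨gg2_car3 hf1 hf2 ha, gg2_car3 hf1 hf2 hb,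
        rep_car3 hf1 hur, fun e => hab (gg2_inj hf1 hf2 ha hb e), ?_, ?_,
        Or.inr (Or.inl ⟨a, b, r, rep_gg2 hf2 ha, rep_gg2 hf2 hb, hur, hr⟩)⟩))
      · intro e
        exact (M2.irrefl a b r hr).2.1
          (rep_unique hf1 hf2 (e ▸ rep_gg2 hf2 ha : Rep M0 M2 f1 f2 u a) hur)
      · intro e
        exact (M2.irrefl a b r hr).2.2
          (rep_unique hf1 hf2 (e ▸ rep_gg2 hf2 hb : Rep M0 M2 f1 f2 u b) hur)

include hf1 hf2 in
lemma line3_pure_mem {a b : V2} {w1 : V1} (ha : a ∈ M2.carrier) (hb : b ∈ M2.carrier)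
    (hab : a ≠ b) (hw : ¬ ∃ z, z ∈ M0.carrier ∧ f1 z = w1) :
    Sum.inl w1 ∈ lineOf (R3 M0 M1 M2 f1 f2) (gg2 M0 f1 f2 a) (gg2 M0 f1 f2 b) ↔
      (w1 ∈ M1.carrier ∧ ∃ x y, x ∈ M0.carrier ∧ y ∈ M0.carrier ∧ x ≠ y ∧
        a ∈ lineOf M2.R (f2 x) (f2 y) ∧ b ∈ lineOf M2.R (f2 x) (f2 y) ∧
        w1 ∈ lineOf M1.R (f1 x) (f1 y)) := by
  constructor
  · intro h
    rcases mem_lineOf.1 h with he | he | hr3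
    · exact absurd he.symm (gg2_ne_inl hw)
    · exact absurd he.symm (gg2_ne_inl hw)
    · obtain ⟨-, -, hcar, -, -, -, hcol⟩ := hr3
      refine ⟨car3_inl hcar, ?_⟩
      rcases hcol with ⟨a1, b1, c1, ha1, hb1, hc1, hR⟩ | ⟨a2, b2, c2, ha2, hb2, hc2, hR⟩ |
        ⟨x, y, hx, hy, hxy, hoga, hogb, hogc⟩
      · obtain ⟨x, hx, hfa, hfa1⟩ := gg2_inl_form ha1
        obtain ⟨y, hy, hfb, hfb1⟩ := gg2_inl_form hb1
        have hc1' : c1 = w1 := (Sum.inl.inj hc1).symm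
        subst hc1'
        rw [← hfa1, ← hfb1] at hR
        refine ⟨x, y, hx, hy, fun e => hab (by rw [← hfa, ← hfb, e]), ?_, ?_,
          mem_lineOf.2 (Or.inr (Or.inr hR))⟩
        · rw [← hfa]; exact left_mem_lineOf
        · rw [← hfb]; exact right_mem_lineOf
      · obtain ⟨x, hx, he, -⟩ := rep_inl hc2
        exact absurd ⟨x, hx, he.symm⟩ hw
      · obtain ⟨hwc, hwl⟩ := OG_inl hogc
        exact ⟨x, y, hx, hy, hxy, OG_rep hf1 hf2 hx hy hoga (rep_gg2 hf2 ha),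
          OG_rep hf1 hf2 hx hy hogb (rep_gg2 hf2 hb), hwl⟩
  · rintro ⟨hw1, x, y, hx, hy, hxy, hal, hbl, hwl⟩
    refine mem_lineOf.2 (Or.inr (Or.inr ⟨gg2_car3 hf1 hf2 ha, gg2_car3 hf1 hf2 hb,
      Or.inl ⟨w1, hw1, rfl⟩, fun e => hab (gg2_inj hf1 hf2 ha hb e),
      gg2_ne_inl hw, gg2_ne_inl hw,
      Or.inr (Or.inr ⟨x, y, hx, hy, hxy, rep_OG hf1 hf2 hx hy (rep_gg2 hf2 ha) hal,
        rep_OG hf1 hf2 hx hy (rep_gg2 hf2 hb) hbl, Or.inl ⟨w1, rfl, hw1, hwl⟩⟩)⟩))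

include hf1 hf2 in
lemma line3_g2_eq {a b c d : V2} (ha : a ∈ M2.carrier) (hb : b ∈ M2.carrier)
    (hc : c ∈ M2.carrier) (hd : d ∈ M2.carrier) (hab : a ≠ b) (hcd : c ≠ d)
    (h : lineOf M2.R a b = lineOf M2.R c d) :
    lineOf (R3 M0 M1 M2 f1 f2) (gg2 M0 f1 f2 a) (gg2 M0 f1 f2 b) =
      lineOf (R3 M0 M1 M2 f1 f2) (gg2 M0 f1 f2 c) (gg2 M0 f1 f2 d) := by
  have key : ∀ x y : V0, x ∈ M0.carrier → y ∈ M0.carrier → x ≠ y →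
      a ∈ lineOf M2.R (f2 x) (f2 y) → b ∈ lineOf M2.R (f2 x) (f2 y) →
      c ∈ lineOf M2.R (f2 x) (f2 y) ∧ d ∈ lineOf M2.R (f2 x) (f2 y) := by
    intro x y hx hy hxy hal hbl
    have he : lineOf M2.R a b = lineOf M2.R (f2 x) (f2 y) :=
      M2.line_unique ((f2_eq_iff hf2 hx hy).not.2 hxy) hal hbl hab
    rw [← he, h]
    exact ⟨left_mem_lineOf, right_mem_lineOf⟩
  have key' : ∀ x y : V0, x ∈ M0.carrier → y ∈ M0.carrier → x ≠ y →
      c ∈ lineOf M2.R (f2 x) (f2 y) → d ∈ lineOf M2.R (f2 x) (f2 y) →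
      a ∈ lineOf M2.R (f2 x) (f2 y) ∧ b ∈ lineOf M2.R (f2 x) (f2 y) := by
    intro x y hx hy hxy hcl hdl
    have he : lineOf M2.R c d = lineOf M2.R (f2 x) (f2 y) :=
      M2.line_unique ((f2_eq_iff hf2 hx hy).not.2 hxy) hcl hdl hcd
    rw [← he, ← h]
    exact ⟨left_mem_lineOf, right_mem_lineOf⟩
  ext u
  rcases u with w1 | c0
  · by_cases hw : ∃ z, z ∈ M0.carrier ∧ f1 z = w1
    · obtain ⟨z, hz, hfz⟩ := hw
      have hrep : Rep M0 M2 f1 f2 (Sum.inl w1) (f2 z) := Or.inr ⟨z, hz, by rw [hfz], rfl⟩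
      rw [line3_rep_mem hf1 hf2 ha hb hab hrep, line3_rep_mem hf1 hf2 hc hd hcd hrep, h]
    · rw [line3_pure_mem hf1 hf2 ha hb hab hw, line3_pure_mem hf1 hf2 hc hd hcd hw]
      constructor
      · rintro ⟨h1, x, y, hx, hy, hxy, hal, hbl, hwl⟩
        obtain ⟨hcl, hdl⟩ := key x y hx hy hxy hal hbl
        exact ⟨h1, x, y, hx, hy, hxy, hcl, hdl, hwl⟩
      · rintro ⟨h1, x, y, hx, hy, hxy, hcl, hdl, hwl⟩
        obtain ⟨hal, hbl⟩ := key' x y hx hy hxy hcl hdl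
        exact ⟨h1, x, y, hx, hy, hxy, hal, hbl, hwl⟩
  · by_cases hcar : Sum.inr c0 ∈ Car3 M0 M1 M2 f2
    · obtain ⟨h1, h2⟩ := car3_inr hcar
      have hrep : Rep M0 M2 f1 f2 (Sum.inr c0) c0 := Or.inl ⟨rfl, h1, h2⟩
      rw [line3_rep_mem hf1 hf2 ha hb hab hrep, line3_rep_mem hf1 hf2 hc hd hcd hrep, h]
    · constructor
      · intro hmem
        exact absurd (line3_mem_car3 (gg2_car3 hf1 hf2 ha) (gg2_car3 hf1 hf2 hb) hmem) hcar
      · intro hmem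
        exact absurd (line3_mem_car3 (gg2_car3 hf1 hf2 hc) (gg2_car3 hf1 hf2 hd) hmem) hcar

include hf1 hf2 in
lemma line3_g2_ne {a b c d : V2} (ha : a ∈ M2.carrier) (hb : b ∈ M2.carrier)
    (hc : c ∈ M2.carrier) (hd : d ∈ M2.carrier) (hab : a ≠ b) (hcd : c ≠ d)
    (h : lineOf M2.R a b ≠ lineOf M2.R c d) :
    lineOf (R3 M0 M1 M2 f1 f2) (gg2 M0 f1 f2 a) (gg2 M0 f1 f2 b) ≠
      lineOf (R3 M0 M1 M2 f1 f2) (gg2 M0 f1 f2 c) (gg2 M0 f1 f2 d) := by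
  intro he
  apply h
  ext z
  constructor
  · intro hz
    have hzc : z ∈ M2.carrier := by
      rcases mem_lineOf.1 hz with rfl | rfl | hr
      · exact ha
      · exact hb
      · exact (M2.R_mem _ _ _ hr).2.2
    rw [← line3_rep_mem hf1 hf2 ha hb hab (rep_gg2 hf2 hzc), he,
      line3_rep_mem hf1 hf2 hc hd hcd (rep_gg2 hf2 hzc)] at hz
    exact hz
  · intro hz
    have hzc : z ∈ M2.carrier := by
      rcases mem_lineOf.1 hz with rfl | rfl | hr
      · exact hc
      · exact hd
      · exact (M2.R_mem _ _ _ hr).2.2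
    rw [← line3_rep_mem hf1 hf2 hc hd hcd (rep_gg2 hf2 hzc), ← he,
      line3_rep_mem hf1 hf2 ha hb hab (rep_gg2 hf2 hzc)] at hz
    exact hz

include hf1 hf2 in
lemma cross_pt_g2 {a b c d : V2} {p' : V1 ⊕ V2} (ha : a ∈ M2.carrier)
    (hb : b ∈ M2.carrier) (hc : c ∈ M2.carrier) (hd : d ∈ M2.carrier)
    (hab : a ≠ b) (hcd : c ≠ d) (hlne : lineOf M2.R a b ≠ lineOf M2.R c d)
    (hp1 : p' ∈ lineOf (R3 M0 M1 M2 f1 f2) (gg2 M0 f1 f2 a) (gg2 M0 f1 f2 b))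
    (hp2 : p' ∈ lineOf (R3 M0 M1 M2 f1 f2) (gg2 M0 f1 f2 c) (gg2 M0 f1 f2 d)) :
    ∃ r, Rep M0 M2 f1 f2 p' r ∧ r ∈ lineOf M2.R a b ∧ r ∈ lineOf M2.R c d := by
  have hpcar : p' ∈ Car3 M0 M1 M2 f2 :=
    line3_mem_car3 (gg2_car3 hf1 hf2 ha) (gg2_car3 hf1 hf2 hb) hp1
  rcases p' with w1 | c0
  · by_cases hw : ∃ z, z ∈ M0.carrier ∧ f1 z = w1
    · obtain ⟨z, hz, hfz⟩ := hw
      have hrep : Rep M0 M2 f1 f2 (Sum.inl w1) (f2 z) := Or.inr ⟨z, hz, by rw [hfz], rfl⟩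
      exact ⟨f2 z, hrep, (line3_rep_mem hf1 hf2 ha hb hab hrep).1 hp1,
        (line3_rep_mem hf1 hf2 hc hd hcd hrep).1 hp2⟩
    · exfalso
      obtain ⟨-, x, y, hx, hy, hxy, hal, hbl, hwl⟩ :=
        (line3_pure_mem hf1 hf2 ha hb hab hw).1 hp1
      obtain ⟨-, x', y', hx', hy', hxy', hcl, hdl, hwl'⟩ :=
        (line3_pure_mem hf1 hf2 hc hd hcd hw).1 hp2
      have e1 : lineOf M2.R a b = lineOf M2.R (f2 x) (f2 y) :=
        M2.line_unique ((f2_eq_iff hf2 hx hy).not.2 hxy) hal hbl hab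
      have e2 : lineOf M2.R c d = lineOf M2.R (f2 x') (f2 y') :=
        M2.line_unique ((f2_eq_iff hf2 hx' hy').not.2 hxy') hcl hdl hcd
      exact no_cross' hf1 hf2 hx hy hx' hy' hxy hxy' (by rw [← e1, ← e2]; exact hlne)
        hwl hwl' hw
  · obtain ⟨h1, h2⟩ := car3_inr hpcar
    have hrep : Rep M0 M2 f1 f2 (Sum.inr c0) c0 := Or.inl ⟨rfl, h1, h2⟩
    exact ⟨c0, hrep, (line3_rep_mem hf1 hf2 ha hb hab hrep).1 hp1,
      (line3_rep_mem hf1 hf2 hc hd hcd hrep).1 hp2⟩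

include hf1 hf2 in
lemma g2_wedge {a b c d : V2} (ha : a ∈ M2.carrier) (hb : b ∈ M2.carrier)
    (hc : c ∈ M2.carrier) (hd : d ∈ M2.carrier) :
    gg2 M0 f1 f2 (M2.wedge a b c d) =
      wedge3 M0 M1 M2 f1 f2 (gg2 M0 f1 f2 a) (gg2 M0 f1 f2 b)
        (gg2 M0 f1 f2 c) (gg2 M0 f1 f2 d) := by
  have hginj : ∀ x y : V2, x ∈ M2.carrier → y ∈ M2.carrier → x ≠ y →
      gg2 M0 f1 f2 x ≠ gg2 M0 f1 f2 y := fun x y hx hy hne he =>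
    hne (gg2_inj hf1 hf2 hx hy he)
  rcases M2.wedge_det a b c d ha hb hc hd with
    ⟨hab, hcd, hlne, hm1, hm2, hout⟩ | ⟨heq, hno⟩
  · set p := M2.wedge a b c d with hp
    have hpc : p ∈ M2.carrier := M2.wedge_mem a b c d ha hb hc hd
    have hlne3 := line3_g2_ne hf1 hf2 ha hb hc hd hab hcd hlne
    have hPex : ∃ p' : V1 ⊕ V2, gg2 M0 f1 f2 a ≠ gg2 M0 f1 f2 b ∧
        gg2 M0 f1 f2 c ≠ gg2 M0 f1 f2 d ∧
        lineOf (R3 M0 M1 M2 f1 f2) (gg2 M0 f1 f2 a) (gg2 M0 f1 f2 b) ≠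
          lineOf (R3 M0 M1 M2 f1 f2) (gg2 M0 f1 f2 c) (gg2 M0 f1 f2 d) ∧
        p' ∈ lineOf (R3 M0 M1 M2 f1 f2) (gg2 M0 f1 f2 a) (gg2 M0 f1 f2 b) ∧
        p' ∈ lineOf (R3 M0 M1 M2 f1 f2) (gg2 M0 f1 f2 c) (gg2 M0 f1 f2 d) ∧
        p' ∉ ({gg2 M0 f1 f2 a, gg2 M0 f1 f2 b, gg2 M0 f1 f2 c, gg2 M0 f1 f2 d} :
          Set (V1 ⊕ V2)) := by
      refine ⟨gg2 M0 f1 f2 p, hginj a b ha hb hab, hginj c d hc hd hcd, hlne3,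
        (line3_rep_mem hf1 hf2 ha hb hab (rep_gg2 hf2 hpc)).2 hm1,
        (line3_rep_mem hf1 hf2 hc hd hcd (rep_gg2 hf2 hpc)).2 hm2, ?_⟩
      intro hmem
      apply hout
      rcases hmem with h | h | h | h
      · exact Or.inl (gg2_inj hf1 hf2 hpc ha h)
      · exact Or.inr (Or.inl (gg2_inj hf1 hf2 hpc hb h))
      · exact Or.inr (Or.inr (Or.inl (gg2_inj hf1 hf2 hpc hc h)))
      · exact Or.inr (Or.inr (Or.inr (gg2_inj hf1 hf2 hpc hd h)))
    rw [wedge3, dif_pos hPex]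
    obtain ⟨-, -, -, hq1, hq2, hq4⟩ := hPex.choose_spec
    obtain ⟨r, hrep, hrm1, hrm2⟩ := cross_pt_g2 hf1 hf2 ha hb hc hd hab hcd hlne hq1 hq2
    by_cases hrp : r = p
    · rw [hrp] at hrep
      exact (rep_inj hf2 (rep_gg2 hf2 hpc) hrep).symm ▸ rfl
    · exfalso
      have e1 : lineOf M2.R r p = lineOf M2.R a b := M2.line_unique hab hrm1 hm1 hrp
      have e2 : lineOf M2.R r p = lineOf M2.R c d := M2.line_unique hcd hrm2 hm2 hrp
      exact hlne (e1.symm.trans e2)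
  · have hPne : ¬ ∃ p' : V1 ⊕ V2, gg2 M0 f1 f2 a ≠ gg2 M0 f1 f2 b ∧
        gg2 M0 f1 f2 c ≠ gg2 M0 f1 f2 d ∧
        lineOf (R3 M0 M1 M2 f1 f2) (gg2 M0 f1 f2 a) (gg2 M0 f1 f2 b) ≠
          lineOf (R3 M0 M1 M2 f1 f2) (gg2 M0 f1 f2 c) (gg2 M0 f1 f2 d) ∧
        p' ∈ lineOf (R3 M0 M1 M2 f1 f2) (gg2 M0 f1 f2 a) (gg2 M0 f1 f2 b) ∧
        p' ∈ lineOf (R3 M0 M1 M2 f1 f2) (gg2 M0 f1 f2 c) (gg2 M0 f1 f2 d) ∧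
        p' ∉ ({gg2 M0 f1 f2 a, gg2 M0 f1 f2 b, gg2 M0 f1 f2 c, gg2 M0 f1 f2 d} :
          Set (V1 ⊕ V2)) := by
      rintro ⟨p', hab3, hcd3, hlne3, hp1, hp2, hout'⟩
      have hab : a ≠ b := fun e => hab3 (by rw [e])
      have hcd : c ≠ d := fun e => hcd3 (by rw [e])
      have hlne : lineOf M2.R a b ≠ lineOf M2.R c d := by
        intro he
        exact hlne3 (line3_g2_eq hf1 hf2 ha hb hc hd hab hcd he)
      obtain ⟨r, hrep, hrm1, hrm2⟩ := cross_pt_g2 hf1 hf2 ha hb hc hd hab hcd hlne hp1 hp2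
      refine hno ⟨r, hab, hcd, hlne, hrm1, hrm2, ?_⟩
      intro hmem
      apply hout'
      simp only [Set.mem_insert_iff, Set.mem_singleton_iff] at hmem ⊢
      rcases hmem with h | h | h | h <;> rw [h] at hrep
      · exact Or.inl (rep_inj hf2 hrep (rep_gg2 hf2 ha))
      · exact Or.inr (Or.inl (rep_inj hf2 hrep (rep_gg2 hf2 hb)))
      · exact Or.inr (Or.inr (Or.inl (rep_inj hf2 hrep (rep_gg2 hf2 hc))))
      · exact Or.inr (Or.inr (Or.inr (rep_inj hf2 hrep (rep_gg2 hf2 hd))))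
    rw [wedge3, dif_neg hPne, heq]

end AmalgLines3b
/-- The class of finite simple ∧-matroids of rank ≤ 3 has the
amalgamation property. -/
theorem amalgamation_property
    (V0 V1 V2 : Type) (M0 : WM V0) (M1 : WM V1) (M2 : WM V2)
    (h0 : M0.carrier.Finite) (h1 : M1.carrier.Finite) (h2 : M2.carrier.Finite)
    (f1 : V0 → V1) (f2 : V0 → V2)
    (hf1 : IsEmb M0 M1 f1) (hf2 : IsEmb M0 M2 f2) :
    ∃ (W : Type) (M3 : WM W) (g1 : V1 → W) (g2 : V2 → W),
      M3.carrier.Finite ∧ IsEmb M1 M3 g1 ∧ IsEmb M2 M3 g2 ∧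
      ∀ x ∈ M0.carrier, g1 (f1 x) = g2 (f2 x) := by
  refine ⟨V1 ⊕ V2, M3 M0 M1 M2 f1 f2 hf1 hf2, Sum.inl, gg2 M0 f1 f2, ?_, ?_, ?_, ?_⟩
  · exact (h1.image _).union ((h2.subset (fun y hy => hy.1)).image _)
  · exact ⟨fun a ha => Or.inl ⟨a, ha, rfl⟩, fun x _ y _ h => Sum.inl.inj h,
      fun a ha b hb c hc => rel_inl hf1 hf2 ha hb hc,
      fun a ha b hb c hc d hd => g1_wedge hf1 hf2 ha hb hc hd⟩
  · exact ⟨fun a ha => gg2_car3 hf1 hf2 ha, fun x hx y hy h => gg2_inj hf1 hf2 hx hy h,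
      fun a ha b hb c hc => rel_gg2 hf1 hf2 ha hb hc,
      fun a ha b hb c hc d hd => g2_wedge hf1 hf2 ha hb hc hd⟩
  · exact fun x hx => (gg2_f2 hf2 hx).symm

end PaoliniMatroids
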